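/- arXiv:2302.03577 — 6 statements merged into one kernel-verified Lean document; each statement's English description precedes it below -/
import Mathlib

section
/- (Stechkin-type inequality) For any s > 0, 0 < p < q ≤ 2, weights ω with ω_i ≥ 1, and x ∈ ℓ²(Γ), the error of best s-ω-sparse approximation in the weighted ℓ^q norm satisfies σ_s(x)_{q,ω} ≤ s^{1/q − 1/p} ‖x‖_{p,ω}. -/
open scoped ENNReal

/-- Stechkin-type inequality: for `s > 0`, `0 < p < q ≤ 2`, weights `ω i ≥ 1` and
`x ∈ ℓ²(Γ)` (with finite weighted `ℓ^p` norm), the error of best `s`-`ω`-sparse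
approximation in the weighted `ℓ^q` norm satisfies
`σ_s(x)_{q,ω} ≤ s^{1/q − 1/p} ‖x‖_{p,ω}`. -/
theorem stmt1 {Γ : Type*} [Countable Γ] (ω : Γ → ℝ) (hω : ∀ i, 1 ≤ ω i)
    (s p q : ℝ) (hs : 0 < s) (hp : 0 < p) (hpq : p < q) (hq : q ≤ 2)
    (x : Γ → ℂ) (hx : Memℓp x 2)
    (hxp : Summable fun i => ‖x i‖ ^ p * ω i ^ (2 - p)) :
    sInf {t : ℝ | ∃ y : Γ → ℂ,
        (∑' i, if y i = 0 then (0 : ℝ≥0∞) else ENNReal.ofReal (ω i ^ 2)) ≤ ENNReal.ofReal s ∧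
        Summable (fun i => ‖x i - y i‖ ^ q * ω i ^ (2 - q)) ∧
        t = (∑' i, ‖x i - y i‖ ^ q * ω i ^ (2 - q)) ^ (1 / q)} ≤
      s ^ (1 / q - 1 / p) * (∑' i, ‖x i‖ ^ p * ω i ^ (2 - p)) ^ (1 / p) := by
  have hωpos : ∀ i, (0:ℝ) < ω i := fun i => lt_of_lt_of_le one_pos (hω i)
  have hqpos : 0 < q := hp.trans hpq
  have hterm_nonneg : ∀ i, 0 ≤ ‖x i‖ ^ p * ω i ^ (2 - p) := fun i =>
    mul_nonneg (Real.rpow_nonneg (norm_nonneg _) _) (Real.rpow_nonneg (hωpos i).le _)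
  set T := ∑' i, ‖x i‖ ^ p * ω i ^ (2 - p) with hTdef
  have hT0 : 0 ≤ T := tsum_nonneg hterm_nonneg
  have hbdd : BddBelow {t : ℝ | ∃ y : Γ → ℂ,
        (∑' i, if y i = 0 then (0 : ℝ≥0∞) else ENNReal.ofReal (ω i ^ 2)) ≤ ENNReal.ofReal s ∧
        Summable (fun i => ‖x i - y i‖ ^ q * ω i ^ (2 - q)) ∧
        t = (∑' i, ‖x i - y i‖ ^ q * ω i ^ (2 - q)) ^ (1 / q)} := by
    refine ⟨0, fun t ht => ?_⟩
    obtain ⟨y, -, -, rfl⟩ := ht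
    exact Real.rpow_nonneg (tsum_nonneg fun i => mul_nonneg
      (Real.rpow_nonneg (norm_nonneg _) _) (Real.rpow_nonneg (hωpos i).le _)) _
  rcases eq_or_lt_of_le hT0 with hT | hT
  · -- case T = 0 : then x = 0, take y = 0
    have hx0 : ∀ i, x i = 0 := by
      intro i
      by_contra h
      have h1 : 0 < ‖x i‖ ^ p * ω i ^ (2 - p) :=
        mul_pos (Real.rpow_pos_of_pos (norm_pos_iff.mpr h) _)
          (Real.rpow_pos_of_pos (hωpos i) _)
      have h2 := Summable.le_tsum hxp i (fun j _ => hterm_nonneg j)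
      rw [← hTdef, ← hT] at h2
      linarith
    have hz : (fun i => ‖x i - (0:ℂ)‖ ^ q * ω i ^ (2 - q)) = fun _ => (0:ℝ) := by
      funext i
      rw [sub_zero, hx0 i, norm_zero, Real.zero_rpow hqpos.ne', zero_mul]
    have hmem : (0:ℝ) ∈ {t : ℝ | ∃ y : Γ → ℂ,
        (∑' i, if y i = 0 then (0 : ℝ≥0∞) else ENNReal.ofReal (ω i ^ 2)) ≤ ENNReal.ofReal s ∧
        Summable (fun i => ‖x i - y i‖ ^ q * ω i ^ (2 - q)) ∧
        t = (∑' i, ‖x i - y i‖ ^ q * ω i ^ (2 - q)) ^ (1 / q)} := by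
      refine ⟨0, by simp, ?_, ?_⟩
      · simp only [Pi.zero_apply]
        rw [hz]; exact summable_zero
      · simp only [Pi.zero_apply]
        rw [hz, tsum_zero, Real.zero_rpow (one_div_ne_zero hqpos.ne')]
    have := csInf_le hbdd hmem
    rw [← hT, Real.zero_rpow (one_div_ne_zero hp.ne'), mul_zero]
    exact this
  · -- case T > 0
    set τ := T / s with hτdef
    have hτ : 0 < τ := div_pos hT hs
    set y : Γ → ℂ := fun i => if τ * ω i ^ p ≤ ‖x i‖ ^ p then x i else 0 with hydef
    have hepos : (0:ℝ) ≤ (q - p) / p := div_nonneg (by linarith) hp.le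
    -- key pointwise bound
    have hkey : ∀ i, ‖x i - y i‖ ^ q * ω i ^ (2 - q) ≤
        τ ^ ((q - p) / p) * (‖x i‖ ^ p * ω i ^ (2 - p)) := by
      intro i
      have hrhs0 : 0 ≤ τ ^ ((q - p) / p) * (‖x i‖ ^ p * ω i ^ (2 - p)) :=
        mul_nonneg (Real.rpow_nonneg hτ.le _) (hterm_nonneg i)
      by_cases hc : τ * ω i ^ p ≤ ‖x i‖ ^ p
      · simp only [hydef, if_pos hc, sub_self, norm_zero]
        rw [Real.zero_rpow hqpos.ne', zero_mul]
        exact hrhs0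
      · simp only [hydef, if_neg hc, sub_zero]
        push_neg at hc
        by_cases hxi : ‖x i‖ = 0
        · have hL : ‖x i‖ ^ q * ω i ^ (2 - q) = 0 := by
            rw [hxi, Real.zero_rpow hqpos.ne', zero_mul]
          rw [hL]; exact hrhs0
        · have hxipos : 0 < ‖x i‖ := lt_of_le_of_ne (norm_nonneg _) (Ne.symm hxi)
          have h1 : ‖x i‖ ^ (q - p) ≤ τ ^ ((q - p) / p) * ω i ^ (q - p) := by
            have h3 := Real.rpow_le_rpow (Real.rpow_nonneg (norm_nonneg _) p) hc.le hepos
            rw [← Real.rpow_mul (norm_nonneg _),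
              show p * ((q - p) / p) = q - p by field_simp,
              Real.mul_rpow hτ.le (Real.rpow_nonneg (hωpos i).le _),
              ← Real.rpow_mul (hωpos i).le,
              show p * ((q - p) / p) = q - p by field_simp] at h3
            exact h3
          have h4 : ‖x i‖ ^ q = ‖x i‖ ^ (q - p) * ‖x i‖ ^ p := by
            rw [← Real.rpow_add hxipos, show q - p + p = q by ring]
          have h5 : ω i ^ (q - p) * ω i ^ (2 - q) = ω i ^ (2 - p) := by
            rw [← Real.rpow_add (hωpos i), show q - p + (2 - q) = 2 - p by ring]
          calc ‖x i‖ ^ q * ω i ^ (2 - q)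
              = (‖x i‖ ^ (q - p) * ω i ^ (2 - q)) * ‖x i‖ ^ p := by rw [h4]; ring
            _ ≤ ((τ ^ ((q - p) / p) * ω i ^ (q - p)) * ω i ^ (2 - q)) * ‖x i‖ ^ p := by
                refine mul_le_mul_of_nonneg_right ?_ (Real.rpow_nonneg (norm_nonneg _) _)
                exact mul_le_mul_of_nonneg_right h1 (Real.rpow_nonneg (hωpos i).le _)
            _ = τ ^ ((q - p) / p) * (‖x i‖ ^ p * ω i ^ (2 - p)) := by
                rw [← h5]; ring
    have htail_nonneg : ∀ i, 0 ≤ ‖x i - y i‖ ^ q * ω i ^ (2 - q) := fun i =>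
      mul_nonneg (Real.rpow_nonneg (norm_nonneg _) _) (Real.rpow_nonneg (hωpos i).le _)
    have hsum : Summable (fun i => ‖x i - y i‖ ^ q * ω i ^ (2 - q)) :=
      Summable.of_nonneg_of_le htail_nonneg hkey (hxp.mul_left _)
    have hA : (∑' i, ‖x i - y i‖ ^ q * ω i ^ (2 - q)) ≤ τ ^ ((q - p) / p) * T := by
      calc (∑' i, ‖x i - y i‖ ^ q * ω i ^ (2 - q))
          ≤ ∑' i, τ ^ ((q - p) / p) * (‖x i‖ ^ p * ω i ^ (2 - p)) :=
            Summable.tsum_le_tsum hkey hsum (hxp.mul_left _)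
        _ = τ ^ ((q - p) / p) * T := by rw [tsum_mul_left]
    -- sparsity bound
    have hsp : (∑' i, if y i = 0 then (0:ℝ≥0∞) else ENNReal.ofReal (ω i ^ 2)) ≤
        ENNReal.ofReal s := by
      have h1 : ∀ i, (if y i = 0 then (0:ℝ≥0∞) else ENNReal.ofReal (ω i ^ 2)) ≤
          ENNReal.ofReal ((‖x i‖ ^ p * ω i ^ (2 - p)) / τ) := by
        intro i
        by_cases h : y i = 0
        · simp [h]
        · rw [if_neg h]
          have hc : τ * ω i ^ p ≤ ‖x i‖ ^ p := by
            by_contra hc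
            exact h (by simp only [hydef, if_neg hc])
          apply ENNReal.ofReal_le_ofReal
          rw [le_div_iff₀ hτ]
          have hω2 : (ω i) ^ 2 = ω i ^ p * ω i ^ (2 - p) := by
            rw [← Real.rpow_add (hωpos i), show p + (2 - p) = (2:ℝ) by ring,
              Real.rpow_two]
          calc ω i ^ 2 * τ = (τ * ω i ^ p) * ω i ^ (2 - p) := by rw [hω2]; ring
            _ ≤ ‖x i‖ ^ p * ω i ^ (2 - p) :=
                mul_le_mul_of_nonneg_right hc (Real.rpow_nonneg (hωpos i).le _)
      have hTτ : T / τ = s := by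
        rw [hτdef]
        field_simp
      calc (∑' i, if y i = 0 then (0:ℝ≥0∞) else ENNReal.ofReal (ω i ^ 2))
          ≤ ∑' i, ENNReal.ofReal ((‖x i‖ ^ p * ω i ^ (2 - p)) / τ) :=
            ENNReal.tsum_le_tsum h1
        _ = ENNReal.ofReal (∑' i, (‖x i‖ ^ p * ω i ^ (2 - p)) / τ) :=
            (ENNReal.ofReal_tsum_of_nonneg (fun i => div_nonneg (hterm_nonneg i) hτ.le)
              (hxp.div_const τ)).symm
        _ = ENNReal.ofReal s := by rw [tsum_div_const, ← hTdef, hTτ]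
    -- final computation
    have hfin : (τ ^ ((q - p) / p) * T) ^ (1 / q) = s ^ (1 / q - 1 / p) * T ^ (1 / p) := by
      rw [hτdef, Real.div_rpow hT0 hs.le, div_eq_mul_inv, ← Real.rpow_neg hs.le,
        mul_right_comm, ← Real.rpow_add_one hT.ne',
        show (q - p) / p + 1 = q / p by field_simp; ring,
        Real.mul_rpow (Real.rpow_nonneg hT0 _) (Real.rpow_nonneg hs.le _),
        ← Real.rpow_mul hT0, ← Real.rpow_mul hs.le,
        show q / p * (1 / q) = 1 / p by field_simp,
        show -((q - p) / p) * (1 / q) = 1 / q - 1 / p by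
          rw [div_sub_div _ _ hqpos.ne' hp.ne', ← neg_div, div_mul_eq_mul_div,
            mul_one_div, div_div, div_eq_div_iff (by positivity) (by positivity)]
          ring,
        mul_comm]
    refine le_trans (csInf_le hbdd ⟨y, hsp, hsum, rfl⟩) ?_
    calc (∑' i, ‖x i - y i‖ ^ q * ω i ^ (2 - q)) ^ (1 / q)
        ≤ (τ ^ ((q - p) / p) * T) ^ (1 / q) :=
          Real.rpow_le_rpow (tsum_nonneg htail_nonneg) hA (by positivity)
      _ = s ^ (1 / q - 1 / p) * T ^ (1 / p) := hfin
end

section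
/- (RNSP ⇒ ℓ¹ distance bound) If A : ℓ²(Λ) → H^m satisfies the robust null space property with respect to (ω, ρ, κ, s), then for all x, z ∈ ℓ¹_ω(Λ): ‖x − z‖_{1,ω} ≤ ((1+ρ)/(1−ρ))(‖z‖_{1,ω} − ‖x‖_{1,ω} + 2σ_s(x)_{1,ω}) + (2κ/(1−ρ))·√s·‖A(x−z)‖. -/
open scoped ENNReal Classical

/-- Weighted `ℓ¹` norm (with value in `ℝ≥0∞`). -/
noncomputable def ewnorm1 {Λ : Type*} (ω : Λ → ℝ) (x : Λ → ℂ) : ℝ≥0∞ :=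
  ∑' i, ENNReal.ofReal (‖x i‖ * ω i)

/-- Weighted `ℓ¹` norm (real-valued, for summable vectors). -/
noncomputable def wnorm1 {Λ : Type*} (ω : Λ → ℝ) (x : Λ → ℂ) : ℝ :=
  ∑' i, ‖x i‖ * ω i

/-- Error of best `s`-`ω`-sparse approximation of `x` in `ℓ¹_ω`. -/
noncomputable def sigma1 {Λ : Type*} (ω : Λ → ℝ) (s : ℝ) (x : Λ → ℂ) : ℝ :=
  sInf {t : ℝ | ∃ y : Λ → ℂ,
    (∑' i, if y i = 0 then (0 : ℝ≥0∞) else ENNReal.ofReal (ω i ^ 2)) ≤ ENNReal.ofReal s ∧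
    Summable (fun i => ‖x i - y i‖ * ω i) ∧ t = wnorm1 ω (fun i => x i - y i)}

/-- The robust null space property with respect to `(ω, ρ, κ, s)`. -/
def RNSP {Λ E : Type*} [NormedAddCommGroup E] [NormedSpace ℂ E]
    (A : (Λ → ℂ) →ₗ[ℂ] E) (ω : Λ → ℝ) (ρ κ : ℝ) (s : ℕ) : Prop :=
  ∀ x : Λ → ℂ, Memℓp x 2 → ∀ S : Finset Λ, (∑ i ∈ S, ω i ^ 2) ≤ (s : ℝ) →
    ENNReal.ofReal (Real.sqrt (∑ i ∈ S, ‖x i‖ ^ 2)) ≤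
      ENNReal.ofReal (ρ / Real.sqrt s) * ewnorm1 ω (fun i => if i ∈ S then 0 else x i) +
        ENNReal.ofReal (κ * ‖A x‖)

/-!
Let `y` be an `s`-sparse approximation of `x` with support `S` and write `v = x - z`.
Cauchy–Schwarz and the RNSP give `‖v_S‖ ≤ ρ ‖v_{Sᶜ}‖ + κ √s ‖A v‖` (all norms weighted `ℓ¹`),
while the triangle inequality gives the cone inequality
`‖v_{Sᶜ}‖ ≤ ‖z‖ - ‖x‖ + ‖v_S‖ + 2 ‖x_{Sᶜ}‖`. Eliminating `‖v_{Sᶜ}‖` bounds `‖v‖`, and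
`‖x_{Sᶜ}‖ ≤ ‖x - y‖`; the infimum over `y` then yields `σ_s(x)`.
-/

open Finset

section WeightedNorm

variable {Λ : Type*} {ω : Λ → ℝ}

theorem wnorm1_nonneg (hω : ∀ i, 0 ≤ ω i) (v : Λ → ℂ) : 0 ≤ wnorm1 ω v :=
  tsum_nonneg fun i => mul_nonneg (norm_nonneg _) (hω i)

theorem ewnorm1_eq_ofReal_wnorm1 (hω : ∀ i, 0 ≤ ω i) {v : Λ → ℂ}
    (hv : Summable fun i => ‖v i‖ * ω i) : ewnorm1 ω v = ENNReal.ofReal (wnorm1 ω v) :=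
  (ENNReal.ofReal_tsum_of_nonneg (fun i => mul_nonneg (norm_nonneg _) (hω i)) hv).symm

theorem summable_weighted_of_norm_le (hω : ∀ i, 0 ≤ ω i) {u v : Λ → ℂ}
    (hv : Summable fun i => ‖v i‖ * ω i) (huv : ∀ i, ‖u i‖ ≤ ‖v i‖) :
    Summable fun i => ‖u i‖ * ω i :=
  hv.of_nonneg_of_le (fun i => mul_nonneg (norm_nonneg _) (hω i))
    fun i => mul_le_mul_of_nonneg_right (huv i) (hω i)

theorem wnorm1_le_of_norm_le (hω : ∀ i, 0 ≤ ω i) {u v : Λ → ℂ}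
    (hv : Summable fun i => ‖v i‖ * ω i) (huv : ∀ i, ‖u i‖ ≤ ‖v i‖) :
    wnorm1 ω u ≤ wnorm1 ω v :=
  (summable_weighted_of_norm_le hω hv huv).tsum_le_tsum
    (fun i => mul_le_mul_of_nonneg_right (huv i) (hω i)) hv

theorem summable_weighted_sub (hω : ∀ i, 0 ≤ ω i) {x z : Λ → ℂ}
    (hx : Summable fun i => ‖x i‖ * ω i) (hz : Summable fun i => ‖z i‖ * ω i) :
    Summable fun i => ‖x i - z i‖ * ω i :=
  (hx.add hz).of_nonneg_of_le (fun i => mul_nonneg (norm_nonneg _) (hω i))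
    fun i => by rw [← add_mul]; exact mul_le_mul_of_nonneg_right (norm_sub_le _ _) (hω i)

theorem wnorm1_sub_le (hω : ∀ i, 0 ≤ ω i) {x z : Λ → ℂ}
    (hx : Summable fun i => ‖x i‖ * ω i) (hz : Summable fun i => ‖z i‖ * ω i) :
    wnorm1 ω (fun i => x i - z i) ≤ wnorm1 ω x + wnorm1 ω z := by
  rw [wnorm1, wnorm1, wnorm1, ← (hx.tsum_add hz)]
  exact (summable_weighted_sub hω hx hz).tsum_le_tsum
    (fun i => by rw [← add_mul]; exact mul_le_mul_of_nonneg_right (norm_sub_le _ _) (hω i))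
    (hx.add hz)

theorem memℓp_two_of_summable_weighted (hω : ∀ i, 1 ≤ ω i) {v : Λ → ℂ}
    (hv : Summable fun i => ‖v i‖ * ω i) : Memℓp v 2 := by
  have hv1 : Summable fun i => ‖v i‖ :=
    hv.of_nonneg_of_le (fun i => norm_nonneg _)
      fun i => le_mul_of_one_le_right (norm_nonneg _) (hω i)
  exact (memℓp_gen (p := 1) (by simpa using hv1)).of_exponent_ge (by norm_num)

theorem exists_finset_of_tsum_weight_le (hω : ∀ i, 1 ≤ ω i) {y : Λ → ℂ} {s : ℕ}
    (hy : (∑' i, if y i = 0 then (0 : ℝ≥0∞) else ENNReal.ofReal (ω i ^ 2)) ≤ ENNReal.ofReal s) :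
    ∃ S : Finset Λ, ∑ i ∈ S, ω i ^ 2 ≤ s ∧ ∀ i ∉ S, y i = 0 := by
  have hfin : (Function.support y).Finite := by
    refine (ENNReal.finite_const_le_of_tsum_ne_top
      (ne_top_of_le_ne_top ENNReal.ofReal_ne_top hy) one_ne_zero).subset fun i hi => ?_
    simp only [Set.mem_ofPred_eq, if_neg (Function.mem_support.1 hi), ENNReal.one_le_ofReal]
    exact one_le_pow₀ (hω i)
  refine ⟨hfin.toFinset, ?_, fun i hi => by simpa using hi⟩
  rw [tsum_eq_sum (s := hfin.toFinset) fun i hi => by simp_all] at hy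
  rw [← ENNReal.ofReal_le_ofReal_iff (Nat.cast_nonneg s),
    ENNReal.ofReal_sum_of_nonneg fun i _ => sq_nonneg _]
  refine le_trans (le_of_eq (sum_congr rfl fun i hi => ?_)) hy
  simp_all

variable (S : Finset Λ)

theorem summable_weighted_ite (hω : ∀ i, 0 ≤ ω i) {v : Λ → ℂ}
    (hv : Summable fun i => ‖v i‖ * ω i) :
    Summable fun i => ‖if i ∈ S then 0 else v i‖ * ω i :=
  summable_weighted_of_norm_le hω hv fun i => by split_ifs <;> simp

theorem wnorm1_eq_sum_add_wnorm1_ite {v : Λ → ℂ} (hv : Summable fun i => ‖v i‖ * ω i) :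
    wnorm1 ω v = ∑ i ∈ S, ‖v i‖ * ω i + wnorm1 ω (fun i => if i ∈ S then 0 else v i) := by
  rw [wnorm1, wnorm1, ← hv.sum_add_tsum_compl (s := S),
    _root_.tsum_subtype (↑S)ᶜ fun i => ‖v i‖ * ω i]
  congr 1
  refine tsum_congr fun i => ?_
  by_cases h : i ∈ S <;> simp [h]

theorem wnorm1_ite_sub_le (hω : ∀ i, 0 ≤ ω i) {x z : Λ → ℂ}
    (hx : Summable fun i => ‖x i‖ * ω i) (hz : Summable fun i => ‖z i‖ * ω i) :
    wnorm1 ω (fun i => if i ∈ S then 0 else x i - z i) ≤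
      wnorm1 ω z - wnorm1 ω x + ∑ i ∈ S, ‖x i - z i‖ * ω i +
        2 * wnorm1 ω (fun i => if i ∈ S then 0 else x i) := by
  have hoff : wnorm1 ω (fun i => if i ∈ S then 0 else x i - z i) ≤
      wnorm1 ω (fun i => if i ∈ S then 0 else x i) +
        wnorm1 ω (fun i => if i ∈ S then 0 else z i) := by
    have h := wnorm1_sub_le hω (summable_weighted_ite S hω hx) (summable_weighted_ite S hω hz)
    convert h using 3 with i
    split_ifs <;> simp
  have hon : ∑ i ∈ S, ‖x i‖ * ω i ≤ ∑ i ∈ S, ‖z i‖ * ω i + ∑ i ∈ S, ‖x i - z i‖ * ω i := by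
    rw [← sum_add_distrib]
    refine sum_le_sum fun i _ => ?_
    rw [← add_mul]
    exact mul_le_mul_of_nonneg_right (norm_le_norm_add_norm_sub' _ _) (hω i)
  linarith [wnorm1_eq_sum_add_wnorm1_ite S hx, wnorm1_eq_sum_add_wnorm1_ite S hz]

theorem wnorm1_ite_le_wnorm1_sub (hω : ∀ i, 0 ≤ ω i) {x y : Λ → ℂ}
    (hyS : ∀ i ∉ S, y i = 0) (hxy : Summable fun i => ‖x i - y i‖ * ω i) :
    wnorm1 ω (fun i => if i ∈ S then 0 else x i) ≤ wnorm1 ω (fun i => x i - y i) :=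
  wnorm1_le_of_norm_le hω hxy fun i => by
    by_cases h : i ∈ S <;> simp [h, hyS]

end WeightedNorm

theorem le_apply_csInf_of_forall_le {T : Set ℝ} (hT : T.Nonempty) (hbdd : BddBelow T)
    {f : ℝ → ℝ} (hf : Monotone f) (hfc : Continuous f) {L : ℝ} (h : ∀ t ∈ T, L ≤ f t) :
    L ≤ f (sInf T) := by
  rw [hf.map_csInf_of_continuousAt hfc.continuousAt hT hbdd]
  exact le_csInf (hT.image f) (Set.forall_mem_image.2 h)

namespace RNSP

variable {Λ E : Type*} [NormedAddCommGroup E] [NormedSpace ℂ E] {A : (Λ → ℂ) →ₗ[ℂ] E}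
  {ω : Λ → ℝ} {ρ κ : ℝ} {s : ℕ}

theorem sum_weighted_le (hA : RNSP A ω ρ κ s) (hω : ∀ i, 1 ≤ ω i) (hρ : 0 ≤ ρ) (hκ : 0 ≤ κ)
    {v : Λ → ℂ} (hv : Summable fun i => ‖v i‖ * ω i) {S : Finset Λ}
    (hS : ∑ i ∈ S, ω i ^ 2 ≤ s) :
    ∑ i ∈ S, ‖v i‖ * ω i ≤
      ρ * wnorm1 ω (fun i => if i ∈ S then 0 else v i) + κ * √s * ‖A v‖ := by
  have hω0 : ∀ i, 0 ≤ ω i := fun i => zero_le_one.trans (hω i)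
  set c := wnorm1 ω (fun i => if i ∈ S then 0 else v i)
  have hc : 0 ≤ c := wnorm1_nonneg hω0 _
  have hRN := hA v (memℓp_two_of_summable_weighted hω hv) S hS
  rw [ewnorm1_eq_ofReal_wnorm1 hω0 (summable_weighted_ite S hω0 hv),
    ← ENNReal.ofReal_mul (by positivity), ← ENNReal.ofReal_add (by positivity) (by positivity),
    ENNReal.ofReal_le_ofReal_iff (by positivity)] at hRN
  have hsqrt : √s * (ρ / √s) ≤ ρ := by
    rcases eq_or_ne (√(s : ℝ)) 0 with h | h
    · simpa [h] using hρ
    · rw [mul_div_cancel₀ _ h]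
  calc ∑ i ∈ S, ‖v i‖ * ω i = ∑ i ∈ S, ω i * ‖v i‖ := sum_congr rfl fun i _ => mul_comm _ _
    _ ≤ √(∑ i ∈ S, ω i ^ 2) * √(∑ i ∈ S, ‖v i‖ ^ 2) := Real.sum_mul_le_sqrt_mul_sqrt _ _ _
    _ ≤ √s * (ρ / √s * c + κ * ‖A v‖) := by gcongr
    _ = √s * (ρ / √s) * c + κ * √s * ‖A v‖ := by ring
    _ ≤ ρ * c + κ * √s * ‖A v‖ := by gcongr

theorem wnorm1_sub_le_of_finset (hA : RNSP A ω ρ κ s) (hω : ∀ i, 1 ≤ ω i) (hρ0 : 0 ≤ ρ)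
    (hρ : ρ < 1) (hκ : 0 ≤ κ) {x z : Λ → ℂ} (hx : Summable fun i => ‖x i‖ * ω i)
    (hz : Summable fun i => ‖z i‖ * ω i) {S : Finset Λ} (hS : ∑ i ∈ S, ω i ^ 2 ≤ s) :
    wnorm1 ω (fun i => x i - z i) ≤
      (1 + ρ) / (1 - ρ) *
          (wnorm1 ω z - wnorm1 ω x + 2 * wnorm1 ω (fun i => if i ∈ S then 0 else x i)) +
        2 * κ / (1 - ρ) * √s * ‖A (x - z)‖ := by
  have hω0 : ∀ i, 0 ≤ ω i := fun i => zero_le_one.trans (hω i)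
  have hv := summable_weighted_sub hω0 hx hz
  set vS := ∑ i ∈ S, ‖x i - z i‖ * ω i
  set vc := wnorm1 ω (fun i => if i ∈ S then 0 else x i - z i)
  set D := wnorm1 ω z - wnorm1 ω x + 2 * wnorm1 ω (fun i => if i ∈ S then 0 else x i)
  set K := κ * √s * ‖A (x - z)‖ with hK
  have hsplit : wnorm1 ω (fun i => x i - z i) = vS + vc := wnorm1_eq_sum_add_wnorm1_ite S hv
  have hnull : vS ≤ ρ * vc + K := hA.sum_weighted_le hω hρ0 hκ (v := x - z) hv hS
  have hcone : vc ≤ D + vS := by linarith [wnorm1_ite_sub_le S hω0 hx hz]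
  have hvc : vc ≤ (D + K) / (1 - ρ) := by
    rw [le_div_iff₀ (by linarith)]
    linarith
  calc wnorm1 ω (fun i => x i - z i) ≤ (1 + ρ) * vc + K := by linarith
    _ ≤ (1 + ρ) * ((D + K) / (1 - ρ)) + K := by gcongr
    _ = (1 + ρ) / (1 - ρ) * D + 2 * κ / (1 - ρ) * √s * ‖A (x - z)‖ := by
      have : 1 - ρ ≠ 0 := by linarith
      rw [hK]
      field_simp
      ring

end RNSP

theorem stmt3_general {Λ E : Type*} [NormedAddCommGroup E] [NormedSpace ℂ E]
    (A : (Λ → ℂ) →ₗ[ℂ] E) (ω : Λ → ℝ) (hω : ∀ i, 1 ≤ ω i) (s : ℕ)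
    (ρ κ : ℝ) (hρ0 : 0 < ρ) (hρ : ρ < 1) (hκ : 0 < κ)
    (hA : RNSP A ω ρ κ s)
    (x z : Λ → ℂ) (hx1 : Summable fun i => ‖x i‖ * ω i)
    (hz1 : Summable fun i => ‖z i‖ * ω i) :
    wnorm1 ω (fun i => x i - z i) ≤
      (1 + ρ) / (1 - ρ) * (wnorm1 ω z - wnorm1 ω x + 2 * sigma1 ω s x) +
        2 * κ / (1 - ρ) * Real.sqrt s * ‖A (x - z)‖ := by
  have hω0 : ∀ i, 0 ≤ ω i := fun i => zero_le_one.trans (hω i)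
  refine le_apply_csInf_of_forall_le (f := fun t => (1 + ρ) / (1 - ρ) *
      (wnorm1 ω z - wnorm1 ω x + 2 * t) + 2 * κ / (1 - ρ) * √s * ‖A (x - z)‖)
    ?_ ?_ (fun a b hab => by dsimp only; gcongr) (by fun_prop) ?_
  · exact ⟨wnorm1 ω x, 0, by simp, by simpa using hx1, by simp⟩
  · refine ⟨0, ?_⟩
    rintro _ ⟨y, -, -, rfl⟩
    exact wnorm1_nonneg hω0 _
  · rintro _ ⟨y, hy, hxy, rfl⟩
    obtain ⟨S, hS, hyS⟩ := exists_finset_of_tsum_weight_le hω hy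
    calc wnorm1 ω (fun i => x i - z i)
        ≤ (1 + ρ) / (1 - ρ) *
            (wnorm1 ω z - wnorm1 ω x + 2 * wnorm1 ω (fun i => if i ∈ S then 0 else x i)) +
          2 * κ / (1 - ρ) * √s * ‖A (x - z)‖ :=
        hA.wnorm1_sub_le_of_finset hω hρ0.le hρ hκ.le hx1 hz1 hS
      _ ≤ _ := by gcongr; exact wnorm1_ite_le_wnorm1_sub S hω0 hyS hxy

/-- RNSP ⇒ ℓ¹ distance bound: if `A` satisfies the RNSP w.r.t. `(ω, ρ, κ, s)`, then for all
`x, z ∈ ℓ¹_ω(Λ)`: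
`‖x − z‖_{1,ω} ≤ ((1+ρ)/(1−ρ))(‖z‖_{1,ω} − ‖x‖_{1,ω} + 2σ_s(x)_{1,ω}) + (2κ/(1−ρ))√s ‖A(x−z)‖`. -/
theorem stmt3 {Λ E : Type*} [Countable Λ] [NormedAddCommGroup E] [NormedSpace ℂ E]
    (A : (Λ → ℂ) →ₗ[ℂ] E) (ω : Λ → ℝ) (hω : ∀ i, 1 ≤ ω i) (s : ℕ) (hs : 1 ≤ s)
    (ρ κ : ℝ) (hρ0 : 0 < ρ) (hρ : ρ < 1) (hκ : 0 < κ)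
    (hA : RNSP A ω ρ κ s)
    (x z : Λ → ℂ) (hx1 : Summable fun i => ‖x i‖ * ω i)
    (hz1 : Summable fun i => ‖z i‖ * ω i) :
    wnorm1 ω (fun i => x i - z i) ≤
      (1 + ρ) / (1 - ρ) * (wnorm1 ω z - wnorm1 ω x + 2 * sigma1 ω s x) +
        2 * κ / (1 - ρ) * Real.sqrt s * ‖A (x - z)‖ :=
  stmt3_general A ω hω s ρ κ hρ0 hρ hκ hA x z hx1 hz1
end

section
/- (RNSP ⇒ ℓ² distance bound) If A : ℓ²(Λ) → H^m satisfies the robust null space property with respect to (ω, ρ, κ, s), then for all x, z ∈ ℓ¹_ω(Λ): ‖x − z‖₂ ≤ (c₁/√s)(‖z‖_{1,ω} − ‖x‖_{1,ω} + 2σ_s(x)_{1,ω}) + c₂‖A(x−z)‖, where c₁ = (ρ+1)(1+ρ)/(1−ρ) and c₂ = (ρ+1)·2κ/(1−ρ) + κ. -/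
open scoped ENNReal Classical

/-!
Write `v = x - z` and let `S` be the support of an `s`-`ω`-sparse `y`. The robust null space
property on `S` and the triangle inequality give the `ℓ¹_ω` error bound
`‖v‖_{1,ω} ≤ (1+ρ)/(1-ρ) (‖z‖_{1,ω} - ‖x‖_{1,ω} + 2‖x_{Sᶜ}‖_{1,ω}) + 2κ√s/(1-ρ) ‖Av‖`.
The `ℓ²` norm of `v` is controlled by its `ℓ¹_ω` norm `L` by applying the null space property to
the large entries `T = {i | L ω i < s ‖v i‖}`: then `ω(T) ≤ s`, and off `T` one has
`‖v i‖² ≤ (L/s) ‖v i‖ ω i`, so `‖v_{Tᶜ}‖₂ ≤ L/√s`. Finally `‖x_{Sᶜ}‖_{1,ω} ≤ ‖x - y‖_{1,ω}`,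
and taking the infimum over `y` yields `σ_s(x)_{1,ω}`.
-/

lemma Real.sqrt_add_le_sqrt_add_sqrt {a b : ℝ} (ha : 0 ≤ a) (hb : 0 ≤ b) :
    √(a + b) ≤ √a + √b := by
  rw [Real.sqrt_le_left (by positivity), add_sq, Real.sq_sqrt ha, Real.sq_sqrt hb]
  nlinarith [Real.sqrt_nonneg a, Real.sqrt_nonneg b]

lemma le_add_mul_csInf {T : Set ℝ} {a b k : ℝ} (hT : T.Nonempty) (hk : 0 < k)
    (h : ∀ t ∈ T, a ≤ b + k * t) : a ≤ b + k * sInf T := by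
  have : (a - b) / k ≤ sInf T := le_csInf hT fun t ht => by
    rw [div_le_iff₀' hk]; linarith [h t ht]
  rw [div_le_iff₀' hk] at this
  linarith

section WeightedSummable

variable {Λ E : Type*} [NormedAddCommGroup E] {ω : Λ → ℝ} {v : Λ → E}

lemma summable_norm_of_summable_norm_mul_weight (hω : ∀ i, 1 ≤ ω i)
    (hv : Summable fun i => ‖v i‖ * ω i) : Summable fun i => ‖v i‖ :=
  hv.of_nonneg_of_le (fun _ => norm_nonneg _)
    fun i => le_mul_of_one_le_right (norm_nonneg _) (hω i)

lemma memℓp_two_of_summable_norm_mul_weight (hω : ∀ i, 1 ≤ ω i)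
    (hv : Summable fun i => ‖v i‖ * ω i) : Memℓp v 2 :=
  (memℓp_gen (by simpa using summable_norm_of_summable_norm_mul_weight hω hv)).of_exponent_ge
    one_le_two

lemma summable_norm_sq_of_summable_norm_mul_weight (hω : ∀ i, 1 ≤ ω i)
    (hv : Summable fun i => ‖v i‖ * ω i) : Summable fun i => ‖v i‖ ^ 2 := by
  simpa using (memℓp_gen_iff (by norm_num)).1 (memℓp_two_of_summable_norm_mul_weight hω hv)

lemma summable_norm_sub_mul_weight {x y : Λ → E} (hω : ∀ i, 0 ≤ ω i)
    (hx : Summable fun i => ‖x i‖ * ω i) (hy : Summable fun i => ‖y i‖ * ω i) :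
    Summable fun i => ‖x i - y i‖ * ω i :=
  (hx.add hy).of_nonneg_of_le (fun i => mul_nonneg (norm_nonneg _) (hω i)) fun i => by
    rw [← add_mul]; exact mul_le_mul_of_nonneg_right (norm_sub_le _ _) (hω i)

lemma tsum_compl_norm_mul_weight_le_tsum_norm_sub_mul_weight {x y : Λ → E} {S : Finset Λ}
    (hω : ∀ i, 0 ≤ ω i) (hxy : Summable fun i => ‖x i - y i‖ * ω i) (hS : ∀ i ∉ S, y i = 0) :
    ∑' i : ↥(S : Set Λ)ᶜ, ‖x i‖ * ω i ≤ ∑' i, ‖x i - y i‖ * ω i :=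
  calc ∑' i : ↥(S : Set Λ)ᶜ, ‖x i‖ * ω i = ∑' i : ↥(S : Set Λ)ᶜ, ‖x i - y i‖ * ω i := by
        congr! with i; rw [hS i i.2, sub_zero]
    _ ≤ ∑' i, ‖x i - y i‖ * ω i :=
        hxy.tsum_subtype_le _ _ fun i => mul_nonneg (norm_nonneg _) (hω i)

end WeightedSummable

section LargeEntries

variable {Λ E : Type*} [NormedAddCommGroup E] {ω : Λ → ℝ} {v : Λ → E} {L s : ℝ}

lemma finite_setOf_mul_weight_lt_mul_norm (hω : ∀ i, 1 ≤ ω i)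
    (hv : Summable fun i => ‖v i‖ * ω i) (hL : 0 < L) (hs : 0 < s) :
    {i | L * ω i < s * ‖v i‖}.Finite := by
  refine (Filter.eventually_cofinite.mp
    (hv.tendsto_cofinite_zero.eventually_lt_const (div_pos hL hs))).subset fun i hi => ?_
  have hLv : L / s < ‖v i‖ := by
    rw [div_lt_iff₀ hs]
    linarith [le_mul_of_one_le_right hL.le (hω i), hi.out]
  exact not_lt.2 (hLv.le.trans (le_mul_of_one_le_right (norm_nonneg _) (hω i)))

lemma sum_weight_sq_le_of_mul_weight_lt_mul_norm {S : Finset Λ} (hω : ∀ i, 0 ≤ ω i)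
    (hL : 0 < L) (hs : 0 ≤ s) (hS : ∀ i ∈ S, L * ω i < s * ‖v i‖) (hSL : ∑ i ∈ S, ‖v i‖ * ω i ≤ L) :
    ∑ i ∈ S, ω i ^ 2 ≤ s := by
  refine le_of_mul_le_mul_left ?_ hL
  calc L * ∑ i ∈ S, ω i ^ 2 = ∑ i ∈ S, (L * ω i) * ω i := by
        rw [Finset.mul_sum]; simp only [sq, mul_assoc]
    _ ≤ ∑ i ∈ S, (s * ‖v i‖) * ω i :=
        Finset.sum_le_sum fun i hi => mul_le_mul_of_nonneg_right (hS i hi).le (hω i)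
    _ = s * ∑ i ∈ S, ‖v i‖ * ω i := by rw [Finset.mul_sum]; simp only [mul_assoc]
    _ ≤ s * L := mul_le_mul_of_nonneg_left hSL hs
    _ = L * s := mul_comm _ _

lemma tsum_compl_norm_sq_le {S : Finset Λ} (hs : 0 < s) (hv : Summable fun i => ‖v i‖ * ω i)
    (hv₂ : Summable fun i => ‖v i‖ ^ 2) (hS : ∀ i ∉ S, s * ‖v i‖ ≤ L * ω i) :
    ∑' i : ↥(S : Set Λ)ᶜ, ‖v i‖ ^ 2 ≤ L / s * ∑' i : ↥(S : Set Λ)ᶜ, ‖v i‖ * ω i := by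
  rw [← tsum_mul_left]
  refine (hv₂.subtype _).tsum_le_tsum (fun i => ?_) ((hv.subtype _).mul_left _)
  have hvi : ‖v i‖ ≤ L / s * ω i := by
    rw [div_mul_eq_mul_div, le_div_iff₀ hs, mul_comm]
    exact hS i i.2
  calc ‖v i‖ ^ 2 = ‖v i‖ * ‖v i‖ := sq _
    _ ≤ L / s * ω i * ‖v i‖ := mul_le_mul_of_nonneg_right hvi (norm_nonneg _)
    _ = L / s * (‖v i‖ * ω i) := by ring

end LargeEntries

section SparseSupport

variable {Λ : Type*} {ω : Λ → ℝ} {y : Λ → ℂ} {s : ℝ}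

/-- The weighted size `ω(supp y)` of the support, in the form used by `sigma1`. -/
noncomputable def supportWeight (ω : Λ → ℝ) (y : Λ → ℂ) : ℝ≥0∞ :=
  ∑' i, if y i = 0 then (0 : ℝ≥0∞) else ENNReal.ofReal (ω i ^ 2)

lemma finite_support_of_supportWeight_le (hω : ∀ i, 1 ≤ ω i)
    (hy : supportWeight ω y ≤ ENNReal.ofReal s) : (Function.support y).Finite :=
  (ENNReal.finite_const_le_of_tsum_ne_top (ne_top_of_le_ne_top ENNReal.ofReal_ne_top hy)
    one_ne_zero).subset fun i hi => by
      show (1 : ℝ≥0∞) ≤ _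
      rw [if_neg hi]
      exact ENNReal.one_le_ofReal.2 (one_le_pow₀ (hω i))

lemma sum_weight_sq_le_of_supportWeight_le (hs : 0 ≤ s)
    (hy : supportWeight ω y ≤ ENNReal.ofReal s) {S : Finset Λ} (hS : ∀ i ∈ S, y i ≠ 0) :
    ∑ i ∈ S, ω i ^ 2 ≤ s := by
  rw [← ENNReal.ofReal_le_ofReal_iff hs, ENNReal.ofReal_sum_of_nonneg fun _ _ => sq_nonneg _]
  refine le_trans (le_of_eq ?_) ((ENNReal.sum_le_tsum S).trans hy)
  exact Finset.sum_congr rfl fun i hi => by rw [if_neg (hS i hi)]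

end SparseSupport

namespace RNSP

variable {Λ E : Type*} [NormedAddCommGroup E] [NormedSpace ℂ E] {A : (Λ → ℂ) →ₗ[ℂ] E}
  {ω : Λ → ℝ} {ρ κ : ℝ} {s : ℕ} {v : Λ → ℂ}

lemma sqrt_sum_sq_le (hA : RNSP A ω ρ κ s) (hω : ∀ i, 1 ≤ ω i) (hρ : 0 ≤ ρ) (hκ : 0 ≤ κ)
    (hv : Summable fun i => ‖v i‖ * ω i) {S : Finset Λ} (hS : ∑ i ∈ S, ω i ^ 2 ≤ s) :
    √(∑ i ∈ S, ‖v i‖ ^ 2) ≤ ρ / √s * ∑' i : ↥(S : Set Λ)ᶜ, ‖v i‖ * ω i + κ * ‖A v‖ := by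
  have hnn : ∀ i, 0 ≤ ‖v i‖ * ω i := fun i => mul_nonneg (norm_nonneg _) (zero_le_one.trans (hω i))
  have htail : ewnorm1 ω (fun i => if i ∈ S then 0 else v i) =
      ENNReal.ofReal (∑' i : ↥(S : Set Λ)ᶜ, ‖v i‖ * ω i) := by
    rw [tsum_subtype (S : Set Λ)ᶜ fun i => ‖v i‖ * ω i,
      ENNReal.ofReal_tsum_of_nonneg (Set.indicator_nonneg fun i _ => hnn i) (hv.indicator _),
      ewnorm1]
    congr! 2 with i
    by_cases hi : i ∈ S <;> simp [hi]
  have h₁ : 0 ≤ ρ / √s * ∑' i : ↥(S : Set Λ)ᶜ, ‖v i‖ * ω i :=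
    mul_nonneg (by positivity) (tsum_nonneg fun i => hnn i)
  have h₂ : 0 ≤ κ * ‖A v‖ := by positivity
  have key := hA v (memℓp_two_of_summable_norm_mul_weight hω hv) S hS
  rwa [htail, ← ENNReal.ofReal_mul (by positivity), ← ENNReal.ofReal_add h₁ h₂,
    ENNReal.ofReal_le_ofReal_iff (add_nonneg h₁ h₂)] at key

lemma sum_norm_mul_weight_le (hA : RNSP A ω ρ κ s) (hω : ∀ i, 1 ≤ ω i) (hs : 0 < s)
    (hρ : 0 ≤ ρ) (hκ : 0 ≤ κ) (hv : Summable fun i => ‖v i‖ * ω i) {S : Finset Λ}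
    (hS : ∑ i ∈ S, ω i ^ 2 ≤ s) :
    ∑ i ∈ S, ‖v i‖ * ω i ≤ ρ * ∑' i : ↥(S : Set Λ)ᶜ, ‖v i‖ * ω i + κ * √s * ‖A v‖ := by
  have hs' : 0 < √(s : ℝ) := Real.sqrt_pos.2 (Nat.cast_pos.2 hs)
  calc ∑ i ∈ S, ‖v i‖ * ω i ≤ √(∑ i ∈ S, ‖v i‖ ^ 2) * √(∑ i ∈ S, ω i ^ 2) :=
        Real.sum_mul_le_sqrt_mul_sqrt _ _ _
    _ ≤ √(∑ i ∈ S, ‖v i‖ ^ 2) * √s := by gcongr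
    _ ≤ (ρ / √s * ∑' i : ↥(S : Set Λ)ᶜ, ‖v i‖ * ω i + κ * ‖A v‖) * √s := by
        gcongr; exact hA.sqrt_sum_sq_le hω hρ hκ hv hS
    _ = ρ * ∑' i : ↥(S : Set Λ)ᶜ, ‖v i‖ * ω i + κ * √s * ‖A v‖ := by
        field_simp

lemma sqrt_tsum_sq_le (hA : RNSP A ω ρ κ s) (hω : ∀ i, 1 ≤ ω i) (hs : 0 < s)
    (hρ : 0 ≤ ρ) (hκ : 0 ≤ κ) (hv : Summable fun i => ‖v i‖ * ω i) :
    √(∑' i, ‖v i‖ ^ 2) ≤ (ρ + 1) / √s * wnorm1 ω v + κ * ‖A v‖ := by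
  have hnn : ∀ i, 0 ≤ ‖v i‖ * ω i := fun i => mul_nonneg (norm_nonneg _) (zero_le_one.trans (hω i))
  have hs₀ : (0 : ℝ) < s := Nat.cast_pos.2 hs
  have hv₂ := summable_norm_sq_of_summable_norm_mul_weight hω hv
  set L := wnorm1 ω v
  rcases (tsum_nonneg hnn : 0 ≤ L).eq_or_lt with hL | hL
  · have hv0 : ∀ i, v i = 0 := fun i => norm_eq_zero.1 <| le_antisymm
      ((le_mul_of_one_le_right (norm_nonneg _) (hω i)).trans
        ((hv.le_tsum i fun j _ => hnn j).trans hL.ge)) (norm_nonneg _)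
    simp only [hv0, norm_zero, zero_pow two_ne_zero, tsum_zero, Real.sqrt_zero]
    positivity
  have hfin := finite_setOf_mul_weight_lt_mul_norm hω hv hL hs₀
  set S := hfin.toFinset
  have hSw : ∑ i ∈ S, ω i ^ 2 ≤ s :=
    sum_weight_sq_le_of_mul_weight_lt_mul_norm (fun i => zero_le_one.trans (hω i)) hL hs₀.le
      (fun i hi => hfin.mem_toFinset.1 hi) (hv.sum_le_tsum S fun i _ => hnn i)
  have hT : ∑' i : ↥(S : Set Λ)ᶜ, ‖v i‖ * ω i ≤ L := hv.tsum_subtype_le _ _ hnn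
  have htail : √(∑' i : ↥(S : Set Λ)ᶜ, ‖v i‖ ^ 2) ≤ L / √s := by
    rw [Real.sqrt_le_left (by positivity), div_pow, Real.sq_sqrt hs₀.le]
    calc ∑' i : ↥(S : Set Λ)ᶜ, ‖v i‖ ^ 2 ≤ L / s * ∑' i : ↥(S : Set Λ)ᶜ, ‖v i‖ * ω i :=
          tsum_compl_norm_sq_le hs₀ hv hv₂ fun i hi => not_lt.1 fun h => hi (hfin.mem_toFinset.2 h)
      _ ≤ L / s * L := by gcongr
      _ = L ^ 2 / s := by ring
  calc √(∑' i, ‖v i‖ ^ 2)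
      = √(∑ i ∈ S, ‖v i‖ ^ 2 + ∑' i : ↥(S : Set Λ)ᶜ, ‖v i‖ ^ 2) := by
        rw [hv₂.sum_add_tsum_compl]
    _ ≤ √(∑ i ∈ S, ‖v i‖ ^ 2) + √(∑' i : ↥(S : Set Λ)ᶜ, ‖v i‖ ^ 2) :=
        Real.sqrt_add_le_sqrt_add_sqrt (by positivity) (tsum_nonneg fun _ => by positivity)
    _ ≤ (ρ / √s * ∑' i : ↥(S : Set Λ)ᶜ, ‖v i‖ * ω i + κ * ‖A v‖) + L / √s :=
        add_le_add (hA.sqrt_sum_sq_le hω hρ hκ hv hSw) htail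
    _ ≤ (ρ / √s * L + κ * ‖A v‖) + L / √s := by gcongr
    _ = (ρ + 1) / √s * L + κ * ‖A v‖ := by ring

lemma wnorm1_sub_le (hA : RNSP A ω ρ κ s) (hω : ∀ i, 1 ≤ ω i) (hs : 0 < s) (hρ₀ : 0 ≤ ρ)
    (hρ : ρ < 1) (hκ : 0 ≤ κ) {x z : Λ → ℂ} (hx : Summable fun i => ‖x i‖ * ω i)
    (hz : Summable fun i => ‖z i‖ * ω i) {S : Finset Λ} (hS : ∑ i ∈ S, ω i ^ 2 ≤ s) :
    wnorm1 ω (x - z) ≤ (1 + ρ) / (1 - ρ) *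
        (wnorm1 ω z - wnorm1 ω x + 2 * ∑' i : ↥(S : Set Λ)ᶜ, ‖x i‖ * ω i) +
      2 * κ * √s / (1 - ρ) * ‖A (x - z)‖ := by
  have hω₀ : ∀ i, 0 ≤ ω i := fun i => zero_le_one.trans (hω i)
  have hv : Summable fun i => ‖(x - z) i‖ * ω i := summable_norm_sub_mul_weight hω₀ hx hz
  have hwv : wnorm1 ω (x - z) = _ := (hv.sum_add_tsum_compl (s := S)).symm
  have hwx : wnorm1 ω x = _ := (hx.sum_add_tsum_compl (s := S)).symm
  have hwz : wnorm1 ω z = _ := (hz.sum_add_tsum_compl (s := S)).symm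
  have htail : ∑' i : ↥(S : Set Λ)ᶜ, ‖(x - z) i‖ * ω i ≤
      ∑' i : ↥(S : Set Λ)ᶜ, ‖x i‖ * ω i + ∑' i : ↥(S : Set Λ)ᶜ, ‖z i‖ * ω i := by
    calc _ ≤ ∑' i : ↥(S : Set Λ)ᶜ, (‖x i‖ * ω i + ‖z i‖ * ω i) :=
          (hv.subtype _).tsum_le_tsum (fun i => by
            rw [← add_mul]; exact mul_le_mul_of_nonneg_right (norm_sub_le _ _) (hω₀ i))
            ((hx.add hz).subtype _)
      _ = _ := (hx.subtype _).tsum_add (hz.subtype _)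
  have hhead : ∑ i ∈ S, ‖x i‖ * ω i ≤ ∑ i ∈ S, ‖z i‖ * ω i + ∑ i ∈ S, ‖(x - z) i‖ * ω i := by
    rw [← Finset.sum_add_distrib]
    refine Finset.sum_le_sum fun i _ => ?_
    rw [← add_mul]; exact mul_le_mul_of_nonneg_right (norm_le_insert' _ _) (hω₀ i)
  have hnsp := hA.sum_norm_mul_weight_le hω hs hρ₀ hκ hv hS
  have key : (1 - ρ) * wnorm1 ω (x - z) ≤ (1 + ρ) *
      (wnorm1 ω z - wnorm1 ω x + 2 * ∑' i : ↥(S : Set Λ)ᶜ, ‖x i‖ * ω i) +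
        2 * κ * √s * ‖A (x - z)‖ := by
    have h₁ : (1 - ρ) * ∑' i : ↥(S : Set Λ)ᶜ, ‖(x - z) i‖ * ω i ≤
        wnorm1 ω z - wnorm1 ω x + 2 * ∑' i : ↥(S : Set Λ)ᶜ, ‖x i‖ * ω i +
          κ * √s * ‖A (x - z)‖ := by linarith
    nlinarith [mul_le_mul_of_nonneg_left hnsp (by linarith : 0 ≤ 1 - ρ),
      mul_le_mul_of_nonneg_left h₁ (by linarith : 0 ≤ 1 + ρ)]
  have h1ρ : 0 < 1 - ρ := by linarith
  calc wnorm1 ω (x - z) = (1 - ρ) * wnorm1 ω (x - z) / (1 - ρ) := by field_simp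
    _ ≤ ((1 + ρ) * (wnorm1 ω z - wnorm1 ω x + 2 * ∑' i : ↥(S : Set Λ)ᶜ, ‖x i‖ * ω i) +
        2 * κ * √s * ‖A (x - z)‖) / (1 - ρ) := by gcongr
    _ = _ := by ring

lemma sqrt_tsum_sq_sub_le (hA : RNSP A ω ρ κ s) (hω : ∀ i, 1 ≤ ω i) (hs : 0 < s)
    (hρ₀ : 0 ≤ ρ) (hρ : ρ < 1) (hκ : 0 ≤ κ) {x z : Λ → ℂ} (hx : Summable fun i => ‖x i‖ * ω i)
    (hz : Summable fun i => ‖z i‖ * ω i) {S : Finset Λ} (hS : ∑ i ∈ S, ω i ^ 2 ≤ s) :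
    √(∑' i, ‖x i - z i‖ ^ 2) ≤ (ρ + 1) * ((1 + ρ) / (1 - ρ)) / √s *
        (wnorm1 ω z - wnorm1 ω x + 2 * ∑' i : ↥(S : Set Λ)ᶜ, ‖x i‖ * ω i) +
      ((ρ + 1) * (2 * κ / (1 - ρ)) + κ) * ‖A (x - z)‖ :=
  calc √(∑' i, ‖x i - z i‖ ^ 2) ≤ (ρ + 1) / √s * wnorm1 ω (x - z) + κ * ‖A (x - z)‖ :=
        hA.sqrt_tsum_sq_le hω hs hρ₀ hκ
          (summable_norm_sub_mul_weight (fun i => zero_le_one.trans (hω i)) hx hz)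
    _ ≤ (ρ + 1) / √s * ((1 + ρ) / (1 - ρ) *
          (wnorm1 ω z - wnorm1 ω x + 2 * ∑' i : ↥(S : Set Λ)ᶜ, ‖x i‖ * ω i) +
        2 * κ * √s / (1 - ρ) * ‖A (x - z)‖) + κ * ‖A (x - z)‖ := by
        gcongr; exact hA.wnorm1_sub_le hω hs hρ₀ hρ hκ hx hz hS
    _ = _ := by
        have : √(s : ℝ) ≠ 0 := (Real.sqrt_pos.2 (Nat.cast_pos.2 hs)).ne'
        field_simp
        ring

lemma sqrt_tsum_sq_sub_le_of_supportWeight_le (hA : RNSP A ω ρ κ s) (hω : ∀ i, 1 ≤ ω i)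
    (hs : 0 < s) (hρ₀ : 0 ≤ ρ) (hρ : ρ < 1) (hκ : 0 ≤ κ) {x z y : Λ → ℂ}
    (hx : Summable fun i => ‖x i‖ * ω i) (hz : Summable fun i => ‖z i‖ * ω i)
    (hy : supportWeight ω y ≤ ENNReal.ofReal s) (hxy : Summable fun i => ‖x i - y i‖ * ω i) :
    √(∑' i, ‖x i - z i‖ ^ 2) ≤ (ρ + 1) * ((1 + ρ) / (1 - ρ)) / √s *
        (wnorm1 ω z - wnorm1 ω x + 2 * wnorm1 ω fun i => x i - y i) +
      ((ρ + 1) * (2 * κ / (1 - ρ)) + κ) * ‖A (x - z)‖ := by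
  have hfin := finite_support_of_supportWeight_le hω hy
  have hS := sum_weight_sq_le_of_supportWeight_le (Nat.cast_nonneg s) hy
    (S := hfin.toFinset) fun i hi => hfin.mem_toFinset.1 hi
  refine (hA.sqrt_tsum_sq_sub_le hω hs hρ₀ hρ hκ hx hz hS).trans ?_
  have h1ρ : 0 < 1 - ρ := by linarith
  gcongr
  exact tsum_compl_norm_mul_weight_le_tsum_norm_sub_mul_weight (fun i => zero_le_one.trans (hω i))
    hxy fun i hi => Function.notMem_support.1 (mt hfin.mem_toFinset.2 hi)

end RNSP

theorem stmt4_general {Λ E : Type*} [NormedAddCommGroup E] [NormedSpace ℂ E]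
    (A : (Λ → ℂ) →ₗ[ℂ] E) (ω : Λ → ℝ) (hω : ∀ i, 1 ≤ ω i) (s : ℕ) (hs : 1 ≤ s)
    (ρ κ : ℝ) (hρ0 : 0 < ρ) (hρ : ρ < 1) (hκ : 0 < κ)
    (hA : RNSP A ω ρ κ s)
    (x z : Λ → ℂ) (hx1 : Summable fun i => ‖x i‖ * ω i)
    (hz1 : Summable fun i => ‖z i‖ * ω i) :
    Real.sqrt (∑' i, ‖x i - z i‖ ^ 2) ≤
      ((ρ + 1) * ((1 + ρ) / (1 - ρ))) / Real.sqrt s *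
          (wnorm1 ω z - wnorm1 ω x + 2 * sigma1 ω s x) +
        ((ρ + 1) * (2 * κ / (1 - ρ)) + κ) * ‖A (x - z)‖ := by
  have hc : 0 < (ρ + 1) * ((1 + ρ) / (1 - ρ)) / Real.sqrt s :=
    div_pos (mul_pos (by linarith) (div_pos (by linarith) (by linarith)))
      (Real.sqrt_pos.2 (Nat.cast_pos.2 hs))
  calc Real.sqrt (∑' i, ‖x i - z i‖ ^ 2)
      ≤ ((ρ + 1) * ((1 + ρ) / (1 - ρ)) / Real.sqrt s * (wnorm1 ω z - wnorm1 ω x) +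
          ((ρ + 1) * (2 * κ / (1 - ρ)) + κ) * ‖A (x - z)‖) +
        2 * ((ρ + 1) * ((1 + ρ) / (1 - ρ)) / Real.sqrt s) * sigma1 ω s x := by
        refine le_add_mul_csInf ⟨_, 0, by simp, by simpa using hx1, rfl⟩ (by positivity) ?_
        rintro t ⟨y, hy, hxy, rfl⟩
        exact (hA.sqrt_tsum_sq_sub_le_of_supportWeight_le hω hs hρ0.le hρ hκ.le hx1 hz1 hy
          hxy).trans_eq (by ring)
    _ = _ := by ring

/-- RNSP ⇒ ℓ² distance bound: if `A` satisfies the RNSP w.r.t. `(ω, ρ, κ, s)`, then for all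
`x, z ∈ ℓ¹_ω(Λ)`:
`‖x − z‖₂ ≤ (c₁/√s)(‖z‖_{1,ω} − ‖x‖_{1,ω} + 2σ_s(x)_{1,ω}) + c₂‖A(x−z)‖`, where
`c₁ = (ρ+1)(1+ρ)/(1−ρ)` and `c₂ = (ρ+1)·2κ/(1−ρ) + κ`. -/
theorem stmt4 {Λ E : Type*} [Countable Λ] [NormedAddCommGroup E] [NormedSpace ℂ E]
    (A : (Λ → ℂ) →ₗ[ℂ] E) (ω : Λ → ℝ) (hω : ∀ i, 1 ≤ ω i) (s : ℕ) (hs : 1 ≤ s)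
    (ρ κ : ℝ) (hρ0 : 0 < ρ) (hρ : ρ < 1) (hκ : 0 < κ)
    (hA : RNSP A ω ρ κ s)
    (x z : Λ → ℂ) (hx1 : Summable fun i => ‖x i‖ * ω i)
    (hz1 : Summable fun i => ‖z i‖ * ω i) :
    Real.sqrt (∑' i, ‖x i - z i‖ ^ 2) ≤
      ((ρ + 1) * ((1 + ρ) / (1 - ρ))) / Real.sqrt s *
          (wnorm1 ω z - wnorm1 ω x + 2 * sigma1 ω s x) +
        ((ρ + 1) * (2 * κ / (1 - ρ)) + κ) * ‖A (x - z)‖ :=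
  stmt4_general A ω hω s hs ρ κ hρ0 hρ hκ hA x z hx1 hz1
end

section
/- Suppose F satisfies the quasi-diagonalization property c·Σ 2^{−2bj}|x_{j,n}|² ≤ ‖FΦ*x‖² ≤ C·Σ 2^{−2bj}|x_{j,n}|² for all x ∈ ℓ²(Γ). Let Λ ⊂ Γ be finite, G := √(P_Λ Φ F*F Φ* ι_Λ), and Z = diag(z_{j,n})_{(j,n)∈Λ} with z_{j,n} > 0. Then (1/C)·max_{(j,n)∈Λ}(z_{j,n}^{−2} 2^{2bj}) ≤ ‖(GZ)⁻¹‖² ≤ (1/c)·max_{(j,n)∈Λ}(z_{j,n}^{−2} 2^{2bj}). -/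
/-- Bounds on `‖(GZ)⁻¹‖` from quasi-diagonalization: if the forward map `F` satisfies the
quasi-diagonalization property on vectors supported in the finite set `Λ` (with wavelets
`φ` at scales `j`), `Z = diag(z_{j,n})` with `z_{j,n} > 0`, and `T = GZ` is the invertible
map with `‖T x‖ = ‖F Φ* ι_Λ (Z x)‖`, then
`(1/C)·max (z^{−2} 2^{2bj}) ≤ ‖(GZ)⁻¹‖² ≤ (1/c)·max (z^{−2} 2^{2bj})`. -/
theorem stmt8 {Λ H₁ Y : Type*} [Fintype Λ] [Nonempty Λ]
    [NormedAddCommGroup H₁] [InnerProductSpace ℂ H₁]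
    [NormedAddCommGroup Y] [InnerProductSpace ℂ Y]
    (j : Λ → ℕ) (b c C : ℝ) (hb : 0 ≤ b) (hc : 0 < c) (hC : 0 < C)
    (F : H₁ →L[ℂ] Y) (φ : Λ → H₁) (hφ : Orthonormal ℂ φ)
    (hqd : ∀ x : EuclideanSpace ℂ Λ,
      c * ∑ i, (2 : ℝ) ^ (-(2 * b) * (j i : ℝ)) * ‖x i‖ ^ 2 ≤ ‖F (∑ i, x i • φ i)‖ ^ 2 ∧
      ‖F (∑ i, x i • φ i)‖ ^ 2 ≤ C * ∑ i, (2 : ℝ) ^ (-(2 * b) * (j i : ℝ)) * ‖x i‖ ^ 2)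
    (z : Λ → ℝ) (hz : ∀ i, 0 < z i)
    (T : EuclideanSpace ℂ Λ ≃L[ℂ] EuclideanSpace ℂ Λ)
    (hT : ∀ x : EuclideanSpace ℂ Λ, ‖T x‖ = ‖F (∑ i, ((z i : ℂ) * x i) • φ i)‖) :
    (1 / C) * (Finset.univ.sup' Finset.univ_nonempty fun i =>
        (2 : ℝ) ^ (2 * b * (j i : ℝ)) / z i ^ 2) ≤
      ‖(T.symm : EuclideanSpace ℂ Λ →L[ℂ] EuclideanSpace ℂ Λ)‖ ^ 2 ∧
    ‖(T.symm : EuclideanSpace ℂ Λ →L[ℂ] EuclideanSpace ℂ Λ)‖ ^ 2 ≤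
      (1 / c) * (Finset.univ.sup' Finset.univ_nonempty fun i =>
        (2 : ℝ) ^ (2 * b * (j i : ℝ)) / z i ^ 2) := by
  classical
  set M := Finset.univ.sup' Finset.univ_nonempty (fun i =>
      (2 : ℝ) ^ (2 * b * (j i : ℝ)) / z i ^ 2) with hM
  have htermpos : ∀ i : Λ, 0 < (2 : ℝ) ^ (2 * b * (j i : ℝ)) / z i ^ 2 := by
    intro i
    have := hz i
    positivity
  have hterm : ∀ i : Λ, (2 : ℝ) ^ (2 * b * (j i : ℝ)) / z i ^ 2 ≤ M := by
    intro i
    rw [hM]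
    exact Finset.le_sup' (fun i => (2 : ℝ) ^ (2 * b * (j i : ℝ)) / z i ^ 2)
      (Finset.mem_univ i)
  have hMpos : 0 < M := lt_of_lt_of_le (htermpos (Classical.arbitrary Λ))
    (hterm (Classical.arbitrary Λ))
  -- weight rewriting
  have hw : ∀ i : Λ, (2 : ℝ) ^ (-(2 * b) * (j i : ℝ)) * z i ^ 2
      = ((2 : ℝ) ^ (2 * b * (j i : ℝ)) / z i ^ 2)⁻¹ := by
    intro i
    rw [neg_mul, Real.rpow_neg (by norm_num)]
    field_simp
  have hwpos : ∀ i : Λ, 0 < (2 : ℝ) ^ (-(2 * b) * (j i : ℝ)) * z i ^ 2 := by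
    intro i
    rw [hw i]
    exact inv_pos.mpr (htermpos i)
  have hwge : ∀ i : Λ, M⁻¹ ≤ (2 : ℝ) ^ (-(2 * b) * (j i : ℝ)) * z i ^ 2 := by
    intro i
    rw [hw i]
    exact inv_anti₀ (htermpos i) (hterm i)
  -- key bound on ‖T x‖²
  have key : ∀ x : EuclideanSpace ℂ Λ,
      c * ∑ i, (2 : ℝ) ^ (-(2 * b) * (j i : ℝ)) * z i ^ 2 * ‖x i‖ ^ 2 ≤ ‖T x‖ ^ 2 ∧
      ‖T x‖ ^ 2 ≤ C * ∑ i, (2 : ℝ) ^ (-(2 * b) * (j i : ℝ)) * z i ^ 2 * ‖x i‖ ^ 2 := by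
    intro x
    have h := hqd (WithLp.toLp 2 (fun i => (z i : ℂ) * x i))
    have hnorm : ∀ i : Λ, ‖(z i : ℂ) * x i‖ ^ 2 = z i ^ 2 * ‖x i‖ ^ 2 := by
      intro i
      rw [norm_mul, Complex.norm_real, Real.norm_of_nonneg (hz i).le, mul_pow]
    have hsum : ∀ i : Λ, (2 : ℝ) ^ (-(2 * b) * (j i : ℝ)) * ‖(z i : ℂ) * x i‖ ^ 2
        = (2 : ℝ) ^ (-(2 * b) * (j i : ℝ)) * z i ^ 2 * ‖x i‖ ^ 2 := by
      intro i; rw [hnorm i]; ring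
    rw [hT x]
    constructor
    · calc c * ∑ i, (2 : ℝ) ^ (-(2 * b) * (j i : ℝ)) * z i ^ 2 * ‖x i‖ ^ 2
          = c * ∑ i, (2 : ℝ) ^ (-(2 * b) * (j i : ℝ)) * ‖(z i : ℂ) * x i‖ ^ 2 := by
            rw [Finset.sum_congr rfl (fun i _ => hsum i)]
        _ ≤ _ := h.1
    · calc ‖F (∑ i, ((z i : ℂ) * x i) • φ i)‖ ^ 2
          ≤ C * ∑ i, (2 : ℝ) ^ (-(2 * b) * (j i : ℝ)) * ‖(z i : ℂ) * x i‖ ^ 2 := h.2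
        _ = C * ∑ i, (2 : ℝ) ^ (-(2 * b) * (j i : ℝ)) * z i ^ 2 * ‖x i‖ ^ 2 := by
            rw [Finset.sum_congr rfl (fun i _ => hsum i)]
  have hnormsq : ∀ x : EuclideanSpace ℂ Λ, ‖x‖ ^ 2 = ∑ i, ‖x i‖ ^ 2 := by
    intro x
    rw [EuclideanSpace.norm_eq, Real.sq_sqrt]
    exact Finset.sum_nonneg fun i _ => sq_nonneg _
  constructor
  · -- lower bound
    obtain ⟨i₀, -, hi₀⟩ := Finset.exists_mem_eq_sup' Finset.univ_nonempty
      (fun i => (2 : ℝ) ^ (2 * b * (j i : ℝ)) / z i ^ 2)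
    set x₀ : EuclideanSpace ℂ Λ := EuclideanSpace.single i₀ (1 : ℂ) with hx₀
    have hx₀norm : ‖x₀‖ = 1 := by
      rw [hx₀, EuclideanSpace.norm_single, norm_one]
    have hsum₀ : ∑ i, (2 : ℝ) ^ (-(2 * b) * (j i : ℝ)) * z i ^ 2 * ‖x₀ i‖ ^ 2
        = (2 : ℝ) ^ (-(2 * b) * (j i₀ : ℝ)) * z i₀ ^ 2 := by
      rw [Finset.sum_eq_single i₀]
      · simp [hx₀, EuclideanSpace.single_apply]
      · intro i _ hi
        simp [hx₀, EuclideanSpace.single_apply, hi]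
      · simp
    have hTx₀pos : 0 < ‖T x₀‖ ^ 2 := by
      refine lt_of_lt_of_le ?_ (key x₀).1
      rw [hsum₀]
      exact mul_pos hc (hwpos i₀)
    have hTx₀ : ‖T x₀‖ ^ 2 ≤ C * ((2 : ℝ) ^ (-(2 * b) * (j i₀ : ℝ)) * z i₀ ^ 2) := by
      have := (key x₀).2
      rwa [hsum₀] at this
    have h1 : (1 : ℝ) ≤ ‖(T.symm : EuclideanSpace ℂ Λ →L[ℂ] EuclideanSpace ℂ Λ)‖ * ‖T x₀‖ := by
      calc (1 : ℝ) = ‖x₀‖ := hx₀norm.symm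
        _ = ‖(T.symm : EuclideanSpace ℂ Λ →L[ℂ] EuclideanSpace ℂ Λ) (T x₀)‖ := by
            simp
        _ ≤ _ := ContinuousLinearMap.le_opNorm _ _
    have h2 : (1 : ℝ) ≤ ‖(T.symm : EuclideanSpace ℂ Λ →L[ℂ] EuclideanSpace ℂ Λ)‖ ^ 2
        * ‖T x₀‖ ^ 2 := by
      calc (1 : ℝ) = 1 * 1 := by ring
        _ ≤ (‖(T.symm : EuclideanSpace ℂ Λ →L[ℂ] EuclideanSpace ℂ Λ)‖ * ‖T x₀‖) ^ 2 := by
            nlinarith [h1]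
        _ = _ := by ring
    have hMeq : M = (2 : ℝ) ^ (2 * b * (j i₀ : ℝ)) / z i₀ ^ 2 := hi₀
    have hw0 : (2 : ℝ) ^ (-(2 * b) * (j i₀ : ℝ)) * z i₀ ^ 2 = M⁻¹ := by
      rw [hw i₀, hMeq]
    rw [hw0] at hTx₀
    have hCM : 0 < C * M⁻¹ := mul_pos hC (inv_pos.mpr hMpos)
    rw [div_mul_eq_mul_div, one_mul, div_le_iff₀ hC]
    calc M ≤ ‖(T.symm : EuclideanSpace ℂ Λ →L[ℂ] EuclideanSpace ℂ Λ)‖ ^ 2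
            * ‖T x₀‖ ^ 2 * M := by nlinarith [h2, hMpos]
      _ ≤ ‖(T.symm : EuclideanSpace ℂ Λ →L[ℂ] EuclideanSpace ℂ Λ)‖ ^ 2 * (C * M⁻¹) * M :=
          mul_le_mul_of_nonneg_right
            (mul_le_mul_of_nonneg_left hTx₀ (sq_nonneg _)) hMpos.le
      _ = ‖(T.symm : EuclideanSpace ℂ Λ →L[ℂ] EuclideanSpace ℂ Λ)‖ ^ 2 * C := by
          field_simp
  · -- upper bound
    have hub : ‖(T.symm : EuclideanSpace ℂ Λ →L[ℂ] EuclideanSpace ℂ Λ)‖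
        ≤ Real.sqrt (M / c) := by
      apply ContinuousLinearMap.opNorm_le_bound _ (Real.sqrt_nonneg _)
      intro y
      set x : EuclideanSpace ℂ Λ := T.symm y with hx
      have hTxy : ‖T x‖ = ‖y‖ := by rw [hx]; simp
      have hS : M⁻¹ * ‖x‖ ^ 2 ≤ ∑ i, (2 : ℝ) ^ (-(2 * b) * (j i : ℝ)) * z i ^ 2 * ‖x i‖ ^ 2 := by
        rw [hnormsq x, Finset.mul_sum]
        apply Finset.sum_le_sum
        intro i _
        exact mul_le_mul_of_nonneg_right (hwge i) (sq_nonneg _)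
      have hkey := (key x).1
      rw [hTxy] at hkey
      have hx2 : ‖x‖ ^ 2 ≤ (M / c) * ‖y‖ ^ 2 := by
        have h3 : c * (M⁻¹ * ‖x‖ ^ 2) ≤ ‖y‖ ^ 2 :=
          le_trans (mul_le_mul_of_nonneg_left hS hc.le) hkey
        rw [div_mul_eq_mul_div, le_div_iff₀ hc]
        calc ‖x‖ ^ 2 * c = M * (c * (M⁻¹ * ‖x‖ ^ 2)) := by field_simp
          _ ≤ M * ‖y‖ ^ 2 := mul_le_mul_of_nonneg_left h3 hMpos.le
      calc ‖x‖ = Real.sqrt (‖x‖ ^ 2) := (Real.sqrt_sq (norm_nonneg _)).symm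
        _ ≤ Real.sqrt ((M / c) * ‖y‖ ^ 2) := Real.sqrt_le_sqrt hx2
        _ = Real.sqrt (M / c) * ‖y‖ := by
            rw [Real.sqrt_mul (by positivity), Real.sqrt_sq (norm_nonneg _)]
    calc ‖(T.symm : EuclideanSpace ℂ Λ →L[ℂ] EuclideanSpace ℂ Λ)‖ ^ 2
        ≤ Real.sqrt (M / c) ^ 2 := by
          have := norm_nonneg (T.symm : EuclideanSpace ℂ Λ →L[ℂ] EuclideanSpace ℂ Λ)
          nlinarith [hub]
      _ = M / c := Real.sq_sqrt (by positivity)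
      _ = (1 / c) * M := by ring
end

section
/- (Hölder-type metric comparison) Let X₁,…,X_m : ℂ^M → H be linear maps, 1 < r < ∞, 1/r + 1/r' = 1, and B ⊂ ℂ^M a set such that ‖X_k w‖ ≤ √τ for all k and all w ∈ B, and such that (1/m)Σ_k ‖X_k w‖² ≤ Q for all w ∈ B. Then for all u, v ∈ B: (Σ_k (‖X_k u‖² − ‖X_k v‖²)²)^{1/2} ≤ 2 τ^{(r−1)/(2r)} m^{1/(2r)} Q^{1/(2r)} · (Σ_k ‖X_k(u−v)‖^{2r'})^{1/(2r')}. -/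
/-- Hölder-type metric comparison: if `‖Xₖ w‖ ≤ √τ` and `(1/m)∑ₖ‖Xₖ w‖² ≤ Q` for all
`w ∈ B`, and `1/r + 1/r' = 1` with `r > 1`, then for `u, v ∈ B`:
`(∑ₖ(‖Xₖu‖² − ‖Xₖv‖²)²)^{1/2} ≤ 2 τ^{(r−1)/(2r)} m^{1/(2r)} Q^{1/(2r)} ·
(∑ₖ‖Xₖ(u−v)‖^{2r'})^{1/(2r')}`. -/
theorem stmt13 {E H : Type*} [NormedAddCommGroup E] [NormedSpace ℂ E]
    [NormedAddCommGroup H] [NormedSpace ℂ H]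
    (m : ℕ) (hm : 1 ≤ m) (X : Fin m → (E →ₗ[ℂ] H))
    (B : Set E) (τ Q : ℝ) (hτ : 0 ≤ τ) (hQ : 0 ≤ Q)
    (r r' : ℝ) (hr : 1 < r) (hrr' : 1 / r + 1 / r' = 1)
    (hXb : ∀ (k : Fin m), ∀ w ∈ B, ‖X k w‖ ≤ Real.sqrt τ)
    (hXQ : ∀ w ∈ B, (1 / (m : ℝ)) * ∑ k, ‖X k w‖ ^ 2 ≤ Q)
    (u v : E) (hu : u ∈ B) (hv : v ∈ B) :
    Real.sqrt (∑ k, (‖X k u‖ ^ 2 - ‖X k v‖ ^ 2) ^ 2) ≤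
      2 * τ ^ ((r - 1) / (2 * r)) * (m : ℝ) ^ (1 / (2 * r)) * Q ^ (1 / (2 * r)) *
        (∑ k, ‖X k (u - v)‖ ^ (2 * r')) ^ (1 / (2 * r')) := by
  have hr0 : (0 : ℝ) < r := lt_trans one_pos hr
  have h1r : 1 / r < 1 := by rw [div_lt_one hr0]; exact hr
  have h1r0 : 0 < 1 / r := by positivity
  have hr'0 : 0 < r' := by
    have h1 : 1 / r' = 1 - 1 / r := by linarith
    have h2 : 0 < 1 / r' := by rw [h1]; linarith
    exact one_div_pos.mp h2
  have conj : Real.HolderConjugate r r' := ⟨by simpa [one_div] using hrr', hr0, hr'0⟩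
  set a : Fin m → ℝ := fun k => ‖X k u‖ with ha
  set b : Fin m → ℝ := fun k => ‖X k v‖ with hb
  set d : Fin m → ℝ := fun k => ‖X k (u - v)‖ with hd
  have ha0 : ∀ k, 0 ≤ a k := fun k => norm_nonneg _
  have hb0 : ∀ k, 0 ≤ b k := fun k => norm_nonneg _
  have hd0 : ∀ k, 0 ≤ d k := fun k => norm_nonneg _
  -- pointwise bound
  have hdk : ∀ k, |a k - b k| ≤ d k := by
    intro k
    simpa [ha, hb, hd, map_sub] using abs_norm_sub_norm_le (X k u) (X k v)
  have stepA : ∀ k, (a k ^ 2 - b k ^ 2) ^ 2 ≤ (a k + b k) ^ 2 * d k ^ 2 := by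
    intro k
    have h2 : (a k - b k) ^ 2 ≤ d k ^ 2 := by
      have h := hdk k
      nlinarith [abs_nonneg (a k - b k), sq_abs (a k - b k)]
    calc (a k ^ 2 - b k ^ 2) ^ 2 = (a k + b k) ^ 2 * (a k - b k) ^ 2 := by ring
      _ ≤ (a k + b k) ^ 2 * d k ^ 2 := by
          exact mul_le_mul_of_nonneg_left h2 (sq_nonneg _)
  -- Hölder
  have holder := Real.inner_le_Lp_mul_Lq_of_nonneg (s := Finset.univ)
    (f := fun k => (a k + b k) ^ 2) (g := fun k => d k ^ 2) conj
    (fun k _ => sq_nonneg _) (fun k _ => sq_nonneg _)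
  have e1 : ∀ k, (((a k + b k) ^ 2 : ℝ)) ^ r = (a k + b k) ^ (2 * r : ℝ) := by
    intro k
    rw [← Real.rpow_natCast (a k + b k) 2, ← Real.rpow_mul (by positivity)]
    norm_num
  have e2 : ∀ k, ((d k ^ 2 : ℝ)) ^ r' = d k ^ (2 * r' : ℝ) := by
    intro k
    rw [← Real.rpow_natCast (d k) 2, ← Real.rpow_mul (hd0 k)]
    norm_num
  rw [Finset.sum_congr rfl (fun k _ => e1 k), Finset.sum_congr rfl (fun k _ => e2 k)] at holder
  set P : ℝ := ∑ k, (a k + b k) ^ (2 * r : ℝ) with hP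
  set T : ℝ := ∑ k, d k ^ (2 * r' : ℝ) with hT
  have hP0 : 0 ≤ P := Finset.sum_nonneg fun k _ => Real.rpow_nonneg (by positivity) _
  have hT0 : 0 ≤ T := Finset.sum_nonneg fun k _ => Real.rpow_nonneg (hd0 k) _
  -- bound on sums of squares
  have hC : ∀ w ∈ B, ∑ k, ‖X k w‖ ^ 2 ≤ (m : ℝ) * Q := by
    intro w hw
    have h := hXQ w hw
    have hm0 : (0 : ℝ) < m := by exact_mod_cast Nat.lt_of_lt_of_le Nat.zero_lt_one hm
    have := mul_le_mul_of_nonneg_left h (le_of_lt hm0)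
    calc ∑ k, ‖X k w‖ ^ 2 = (m : ℝ) * ((1 / (m : ℝ)) * ∑ k, ‖X k w‖ ^ 2) := by
          field_simp
      _ ≤ (m : ℝ) * Q := this
  -- bound on P
  have habτ : ∀ k, a k + b k ≤ 2 * Real.sqrt τ := by
    intro k
    have h1 := hXb k u hu
    have h2 := hXb k v hv
    simp only [ha, hb]; linarith
  have hpow : ∀ k, (a k + b k) ^ (2 * r : ℝ) ≤
      (2 * Real.sqrt τ) ^ (2 * r - 2 : ℝ) * (a k + b k) ^ 2 := by
    intro k
    have h0 : (0 : ℝ) ≤ a k + b k := by positivity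
    have hsplit : (a k + b k) ^ (2 * r : ℝ) =
        (a k + b k) ^ (2 * r - 2 : ℝ) * (a k + b k) ^ (2 : ℝ) := by
      rw [← Real.rpow_add' h0 (by ring_nf; positivity)]
      norm_num
    rw [hsplit, Real.rpow_two]
    exact mul_le_mul_of_nonneg_right
      (Real.rpow_le_rpow h0 (habτ k) (by linarith)) (sq_nonneg _)
  have hconst : (2 * Real.sqrt τ) ^ (2 * r - 2 : ℝ) =
      2 ^ (2 * r - 2 : ℝ) * τ ^ (r - 1 : ℝ) := by
    rw [Real.mul_rpow (by norm_num) (Real.sqrt_nonneg τ)]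
    congr 1
    rw [Real.sqrt_eq_rpow, ← Real.rpow_mul hτ]
    congr 1
    ring
  have hsum2 : ∑ k, (a k + b k) ^ 2 ≤ 4 * ((m : ℝ) * Q) := by
    have h1 : ∑ k, a k ^ 2 ≤ (m : ℝ) * Q := hC u hu
    have h2 : ∑ k, b k ^ 2 ≤ (m : ℝ) * Q := hC v hv
    calc ∑ k, (a k + b k) ^ 2 ≤ ∑ k, (2 * a k ^ 2 + 2 * b k ^ 2) :=
          Finset.sum_le_sum fun k _ => by nlinarith [sq_nonneg (a k - b k)]
      _ = 2 * ∑ k, a k ^ 2 + 2 * ∑ k, b k ^ 2 := by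
          rw [Finset.sum_add_distrib, ← Finset.mul_sum, ← Finset.mul_sum]
      _ ≤ 4 * ((m : ℝ) * Q) := by linarith
  have hPbound : P ≤ 2 ^ (2 * r : ℝ) * (τ ^ (r - 1 : ℝ) * ((m : ℝ) * Q)) := by
    have hτ0 : (0 : ℝ) ≤ τ ^ (r - 1 : ℝ) := Real.rpow_nonneg hτ _
    calc P ≤ ∑ k, (2 * Real.sqrt τ) ^ (2 * r - 2 : ℝ) * (a k + b k) ^ 2 :=
          Finset.sum_le_sum fun k _ => hpow k
      _ = 2 ^ (2 * r - 2 : ℝ) * τ ^ (r - 1 : ℝ) * ∑ k, (a k + b k) ^ 2 := by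
          rw [← Finset.mul_sum, hconst]
      _ ≤ 2 ^ (2 * r - 2 : ℝ) * τ ^ (r - 1 : ℝ) * (4 * ((m : ℝ) * Q)) := by
          apply mul_le_mul_of_nonneg_left hsum2
          positivity
      _ = 2 ^ (2 * r : ℝ) * (τ ^ (r - 1 : ℝ) * ((m : ℝ) * Q)) := by
          have : (2 : ℝ) ^ (2 * r : ℝ) = 2 ^ (2 * r - 2 : ℝ) * 2 ^ (2 : ℝ) := by
            rw [← Real.rpow_add (by norm_num : (0:ℝ) < 2)]
            norm_num
          rw [this]
          rw [show ((2:ℝ) ^ (2:ℝ)) = 4 by rw [Real.rpow_two]; norm_num]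
          ring
  -- combine
  have step1 : Real.sqrt (∑ k, (a k ^ 2 - b k ^ 2) ^ 2) ≤
      Real.sqrt (P ^ (1 / r) * T ^ (1 / r')) := by
    apply Real.sqrt_le_sqrt
    calc ∑ k, (a k ^ 2 - b k ^ 2) ^ 2 ≤ ∑ k, (a k + b k) ^ 2 * d k ^ 2 :=
          Finset.sum_le_sum fun k _ => stepA k
      _ ≤ P ^ (1 / r) * T ^ (1 / r') := holder
  have step2 : Real.sqrt (P ^ (1 / r) * T ^ (1 / r')) =
      P ^ (1 / (2 * r)) * T ^ (1 / (2 * r')) := by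
    rw [Real.sqrt_mul (Real.rpow_nonneg hP0 _), Real.sqrt_eq_rpow, Real.sqrt_eq_rpow,
      ← Real.rpow_mul hP0, ← Real.rpow_mul hT0]
    congr 1 <;> [skip; congr 1] <;> ring
  have step3 : P ^ (1 / (2 * r)) ≤
      2 * τ ^ ((r - 1) / (2 * r)) * (m : ℝ) ^ (1 / (2 * r)) * Q ^ (1 / (2 * r)) := by
    calc P ^ (1 / (2 * r)) ≤
        (2 ^ (2 * r : ℝ) * (τ ^ (r - 1 : ℝ) * ((m : ℝ) * Q))) ^ (1 / (2 * r)) :=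
          Real.rpow_le_rpow hP0 hPbound (by positivity)
      _ = 2 * τ ^ ((r - 1) / (2 * r)) * (m : ℝ) ^ (1 / (2 * r)) * Q ^ (1 / (2 * r)) := by
          rw [Real.mul_rpow (by positivity) (by positivity),
            Real.mul_rpow (Real.rpow_nonneg hτ _) (by positivity),
            Real.mul_rpow (by positivity) hQ,
            ← Real.rpow_mul (by norm_num : (0:ℝ) ≤ 2),
            ← Real.rpow_mul hτ]
          rw [show (2 * r) * (1 / (2 * r)) = 1 by field_simp]
          rw [show (r - 1) * (1 / (2 * r)) = (r - 1) / (2 * r) by ring]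
          rw [Real.rpow_one]
          ring
  calc Real.sqrt (∑ k, (a k ^ 2 - b k ^ 2) ^ 2) ≤
      P ^ (1 / (2 * r)) * T ^ (1 / (2 * r')) := by rw [← step2]; exact step1
    _ ≤ (2 * τ ^ ((r - 1) / (2 * r)) * (m : ℝ) ^ (1 / (2 * r)) * Q ^ (1 / (2 * r))) *
        T ^ (1 / (2 * r')) := by
        exact mul_le_mul_of_nonneg_right step3 (Real.rpow_nonneg hT0 _)
end

section
/- (Quasi-best sparse approximation chunking) Let x ∈ ℓ²(Λ), ω ∈ [1,∞)^Λ weights, S ⊂ Λ with ω(S) ≤ s, and λ̃ ≥ 4s ≥ ‖ω‖∞². Partition S^c into consecutive blocks Ω₁, Ω₂, … obtained from the non-increasing rearrangement of (|x_k|/ω_k)_{k∈S^c}, where each Ω_j is maximal with ω(Ω_j) ≤ λ̃. Then each Ω_j is non-empty and finite, ∪_j Ω_j = S^c, and for every j ≥ 2: ‖x_{Ω_j}‖₂ ≤ (1/√λ̃)·‖x_{Ω_{j−1} ∪ Ω_j}‖_{1,ω}; consequently Σ_{j≥2} ‖x_{Ω_{j−1} ∪ Ω_j}‖_{1,ω}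 ≤ 2‖x‖_{1,ω}. -/
/-!
Sort `Sᶜ` by non-increasing ratio `‖x i‖ / ω i` and cut the sorted list greedily into maximal
blocks of weight at most `λ̃`. Let `t` be the ratio at the first element `e` of `Ω_j`. All ratios
on `Ω_j` are at most `t`, so `‖x_{Ω_j}‖₂² ≤ t ‖x_{Ω_j}‖_{1,ω}`; all ratios on `Ω_{j-1}` are at
least `t`, and maximality of `Ω_{j-1}` gives `λ̃ < ω(Ω_{j-1}) + ω_e²`, so
`t λ̃ ≤ ‖x_{Ω_{j-1} ∪ Ω_j}‖_{1,ω}`. Together, `‖x_{Ω_j}‖₂² ≤ ‖x_{Ω_{j-1} ∪ Ω_j}‖_{1,ω}² / λ̃`.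
The summed bound holds because every block lies in at most two of the unions.
-/

open scoped Classical

open Function

section GreedyBlocks

variable {Λ : Type*} (ω : Λ → ℝ)

def sqWeight (l : List Λ) : ℝ := (l.map (ω · ^ 2)).sum

@[simp] lemma sqWeight_nil : sqWeight ω [] = 0 := rfl

@[simp] lemma sqWeight_cons (a : Λ) (l : List Λ) :
    sqWeight ω (a :: l) = ω a ^ 2 + sqWeight ω l := by
  simp [sqWeight]

lemma sqWeight_eq_sum_toFinset [DecidableEq Λ] {l : List Λ} (hl : l.Nodup) :
    sqWeight ω l = ∑ i ∈ l.toFinset, ω i ^ 2 :=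
  (List.sum_toFinset _ hl).symm

noncomputable def splitAtBudget : ℝ → List Λ → List Λ × List Λ
  | _, [] => ([], [])
  | b, a :: l =>
    if ω a ^ 2 ≤ b then Prod.map (a :: ·) id (splitAtBudget (b - ω a ^ 2) l) else ([], a :: l)

lemma splitAtBudget_fst_append_snd (b : ℝ) (l : List Λ) :
    (splitAtBudget ω b l).1 ++ (splitAtBudget ω b l).2 = l := by
  fun_induction splitAtBudget ω b l <;> simp_all

lemma length_splitAtBudget_snd_le (b : ℝ) (l : List Λ) :
    (splitAtBudget ω b l).2.length ≤ l.length := by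
  conv_rhs => rw [← splitAtBudget_fst_append_snd ω b l]
  simp

lemma sqWeight_splitAtBudget_fst_le {b : ℝ} (hb : 0 ≤ b) (l : List Λ) :
    sqWeight ω (splitAtBudget ω b l).1 ≤ b := by
  fun_induction splitAtBudget ω b l with
  | case1 => simpa
  | case2 b a l hab ih =>
    have := ih (sub_nonneg.mpr hab)
    simp only [Prod.map_fst, sqWeight_cons]
    linarith
  | case3 => simpa

lemma lt_sqWeight_splitAtBudget_fst_add {b : ℝ} {l : List Λ} {a : Λ} {r : List Λ}
    (h : (splitAtBudget ω b l).2 = a :: r) :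
    b < sqWeight ω (splitAtBudget ω b l).1 + ω a ^ 2 := by
  fun_induction splitAtBudget ω b l with
  | case1 => simp at h
  | case2 b a' l hab ih =>
    have := ih h
    simp only [Prod.map_fst, sqWeight_cons]
    linarith
  | case3 b a' l hab =>
    obtain ⟨rfl, -⟩ := List.cons.inj h
    simpa using not_le.mp hab

/-- A block always takes its first element, even if that element alone exceeds `b`; when every
`ω i ^ 2 ≤ b`, the blocks are the maximal ones of the greedy partition. -/
noncomputable def blocks (b : ℝ) : List Λ → List (List Λ)
  | [] => []
  | a :: l =>
    (a :: (splitAtBudget ω (b - ω a ^ 2) l).1) :: blocks b (splitAtBudget ω (b - ω a ^ 2) l).2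
termination_by l => l.length
decreasing_by exact Nat.lt_succ_of_le (length_splitAtBudget_snd_le ..)

lemma flatten_blocks (b : ℝ) (l : List Λ) : (blocks ω b l).flatten = l := by
  fun_induction blocks ω b l with
  | case1 => simp
  | case2 a l ih =>
    rw [List.flatten_cons, ih, List.cons_append, splitAtBudget_fst_append_snd]

lemma ne_nil_of_mem_blocks {b : ℝ} {l c : List Λ} (hc : c ∈ blocks ω b l) : c ≠ [] := by
  fun_induction blocks ω b l with
  | case1 => simp at hc
  | case2 a l ih =>
    rcases List.mem_cons.mp hc with rfl | hc
    · exact List.cons_ne_nil _ _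
    · exact ih hc

lemma sqWeight_le_of_mem_blocks {b : ℝ} {l c : List Λ} (hl : ∀ i ∈ l, ω i ^ 2 ≤ b)
    (hc : c ∈ blocks ω b l) : sqWeight ω c ≤ b := by
  fun_induction blocks ω b l with
  | case1 => simp at hc
  | case2 a l ih =>
    have hab : ω a ^ 2 ≤ b := hl a List.mem_cons_self
    rcases List.mem_cons.mp hc with rfl | hc
    · have := sqWeight_splitAtBudget_fst_le ω (sub_nonneg.mpr hab) l
      rw [sqWeight_cons]
      linarith
    · refine ih (fun i hi => hl i (List.mem_cons_of_mem a ?_)) hc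
      rw [← splitAtBudget_fst_append_snd ω (b - ω a ^ 2) l]
      exact List.mem_append_right _ hi

lemma isChain_blocks (b : ℝ) (l : List Λ) :
    (blocks ω b l).IsChain fun c d => ∀ e ∈ d.head?, b < sqWeight ω c + ω e ^ 2 := by
  fun_induction blocks ω b l with
  | case1 => simp
  | case2 a l ih =>
    rcases hr : (splitAtBudget ω (b - ω a ^ 2) l).2 with _ | ⟨a', r⟩
    · simp [blocks]
    · rw [hr, blocks] at ih
      rw [blocks]
      refine List.isChain_cons_cons.mpr ⟨?_, ih⟩
      rintro e ⟨⟩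
      have := lt_sqWeight_splitAtBudget_fst_add ω hr
      rw [sqWeight_cons]
      linarith

end GreedyBlocks

section RatioBounds

variable {ι E : Type*} [SeminormedAddCommGroup E] {x : ι → E} {ω : ι → ℝ}

lemma sum_norm_sq_le_mul_sum_norm_mul {B : Finset ι} {t : ℝ} (hω : ∀ i ∈ B, 0 < ω i)
    (ht : ∀ i ∈ B, ‖x i‖ / ω i ≤ t) :
    ∑ i ∈ B, ‖x i‖ ^ 2 ≤ t * ∑ i ∈ B, ‖x i‖ * ω i := by
  rw [Finset.mul_sum]
  refine Finset.sum_le_sum fun i hi => ?_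
  calc ‖x i‖ ^ 2 = ‖x i‖ / ω i * (‖x i‖ * ω i) := by field_simp [(hω i hi).ne']
    _ ≤ t * (‖x i‖ * ω i) :=
      mul_le_mul_of_nonneg_right (ht i hi) (mul_nonneg (norm_nonneg _) (hω i hi).le)

lemma mul_sum_sq_le_sum_norm_mul {A : Finset ι} {t : ℝ} (hω : ∀ i ∈ A, 0 < ω i)
    (ht : ∀ i ∈ A, t ≤ ‖x i‖ / ω i) :
    t * ∑ i ∈ A, ω i ^ 2 ≤ ∑ i ∈ A, ‖x i‖ * ω i := by
  rw [Finset.mul_sum]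
  refine Finset.sum_le_sum fun i hi => ?_
  calc t * ω i ^ 2 ≤ ‖x i‖ / ω i * ω i ^ 2 := by gcongr; exact ht i hi
    _ = ‖x i‖ * ω i := by field_simp [(hω i hi).ne']

lemma sqrt_sum_norm_sq_le_of_lt_sum_sq_add [DecidableEq ι] {A B : Finset ι} {e : ι} {lam : ℝ}
    (hω : ∀ i, 0 < ω i) (hlam : 0 < lam) (hAB : Disjoint A B) (he : e ∈ B)
    (hA : ∀ a ∈ A, ‖x e‖ / ω e ≤ ‖x a‖ / ω a) (hB : ∀ b ∈ B, ‖x b‖ / ω b ≤ ‖x e‖ / ω e)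
    (hover : lam < ∑ i ∈ A, ω i ^ 2 + ω e ^ 2) :
    √(∑ i ∈ B, ‖x i‖ ^ 2) ≤ 1 / √lam * ∑ i ∈ A ∪ B, ‖x i‖ * ω i := by
  set t := ‖x e‖ / ω e
  set M := ∑ i ∈ A ∪ B, ‖x i‖ * ω i with hM_def
  have hterm : ∀ i, 0 ≤ ‖x i‖ * ω i := fun i => mul_nonneg (norm_nonneg _) (hω i).le
  have ht : 0 ≤ t := div_nonneg (norm_nonneg _) (hω e).le
  have hM : 0 ≤ M := Finset.sum_nonneg fun i _ => hterm i
  have hBM : ∑ i ∈ B, ‖x i‖ * ω i ≤ M :=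
    Finset.sum_le_sum_of_subset_of_nonneg Finset.subset_union_right fun i _ _ => hterm i
  have htlam : t * lam ≤ M := by
    have hA' := mul_sum_sq_le_sum_norm_mul (fun i _ => hω i) hA
    have he' : t * ω e ^ 2 ≤ ∑ i ∈ B, ‖x i‖ * ω i := by
      calc t * ω e ^ 2 = ‖x e‖ * ω e := by simp only [t]; field_simp [(hω e).ne']
        _ ≤ _ := Finset.single_le_sum (fun i _ => hterm i) he
    calc t * lam ≤ t * (∑ i ∈ A, ω i ^ 2 + ω e ^ 2) := by gcongr
      _ ≤ M := by rw [mul_add, hM_def, Finset.sum_union hAB]; linarith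
  have hsq : ∑ i ∈ B, ‖x i‖ ^ 2 ≤ (1 / √lam * M) ^ 2 := by
    rw [mul_pow, div_pow, one_pow, Real.sq_sqrt hlam.le, one_div_mul_eq_div, le_div_iff₀ hlam]
    calc (∑ i ∈ B, ‖x i‖ ^ 2) * lam ≤ t * M * lam := by
          gcongr
          exact (sum_norm_sq_le_mul_sum_norm_mul (fun i _ => hω i) hB).trans (by gcongr)
      _ = t * lam * M := by ring
      _ ≤ M * M := by gcongr
      _ = M ^ 2 := by ring
  exact (Real.sqrt_le_sqrt hsq).trans_eq (Real.sqrt_sq (mul_nonneg (by positivity) hM))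

end RatioBounds

section Indexing

variable {α : Type*} [DecidableEq α]

lemma pairwise_disjoint_toFinset_getD {L : List (List α)} (hL : L.flatten.Nodup) :
    Pairwise (Disjoint on fun j => (L.getD j []).toFinset) := by
  have hlt : ∀ j j', j < j' → Disjoint (L.getD j []).toFinset (L.getD j' []).toFinset := by
    intro j j' hjj'
    by_cases hj' : j' < L.length
    · rw [L.getD_eq_getElem _ (hjj'.trans hj'), L.getD_eq_getElem _ hj',
        List.disjoint_toFinset_iff_disjoint]
      exact List.pairwise_iff_getElem.mp (List.nodup_flatten.mp hL).2 j j' _ hj' hjj'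
    · rw [L.getD_eq_default _ (not_lt.mp hj'), List.toFinset_nil]
      exact Finset.disjoint_empty_right _
  intro j j' hne
  rcases hne.lt_or_gt with h | h
  exacts [hlt j j' h, (hlt j' j h).symm]

lemma biUnion_range_toFinset_getD (L : List (List α)) :
    (Finset.range L.length).biUnion (fun j => (L.getD j []).toFinset) = L.flatten.toFinset := by
  ext i
  simp only [Finset.mem_biUnion, Finset.mem_range, List.mem_toFinset, List.mem_flatten]
  constructor
  · rintro ⟨j, hj, hi⟩
    exact ⟨_, List.getElem_mem hj, by rwa [L.getD_eq_getElem _ hj] at hi⟩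
  · rintro ⟨c, hc, hi⟩
    obtain ⟨j, hj, rfl⟩ := List.mem_iff_getElem.mp hc
    exact ⟨j, hj, by rwa [L.getD_eq_getElem _ hj]⟩

end Indexing

lemma sum_Ico_sum_union_pred_le {ι : Type*} [DecidableEq ι] (Ω : ℕ → Finset ι) {g : ι → ℝ}
    (hg : ∀ i, 0 ≤ g i) (hΩ : Pairwise (Disjoint on Ω)) (K : ℕ) :
    ∑ j ∈ Finset.Ico 1 K, ∑ i ∈ Ω (j - 1) ∪ Ω j, g i ≤
      2 * ∑ i ∈ (Finset.range K).biUnion Ω, g i := by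
  have hblock : ∀ j, 0 ≤ ∑ i ∈ Ω j, g i := fun j => Finset.sum_nonneg fun i _ => hg i
  have htotal : ∑ i ∈ (Finset.range K).biUnion Ω, g i = ∑ j ∈ Finset.range K, ∑ i ∈ Ω j, g i :=
    Finset.sum_biUnion (hΩ.set_pairwise _)
  have hprev :
      ∑ j ∈ Finset.Ico 1 K, ∑ i ∈ Ω (j - 1), g i ≤ ∑ j ∈ Finset.range K, ∑ i ∈ Ω j, g i := by
    rw [Finset.sum_Ico_eq_sum_range]
    simp only [Nat.add_sub_cancel_left]
    exact Finset.sum_le_sum_of_subset_of_nonneg (Finset.range_subset_range.mpr (by omega))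
      fun j _ _ => hblock j
  have hcur : ∑ j ∈ Finset.Ico 1 K, ∑ i ∈ Ω j, g i ≤ ∑ j ∈ Finset.range K, ∑ i ∈ Ω j, g i :=
    Finset.sum_le_sum_of_subset_of_nonneg
      (by rw [Finset.range_eq_Ico]; exact Finset.Ico_subset_Ico_left zero_le_one)
      fun j _ _ => hblock j
  rw [Finset.sum_congr rfl fun j hj => Finset.sum_union (hΩ (by simp at hj; omega)),
    Finset.sum_add_distrib, htotal]
  linarith

lemma exists_perm_pairwise_antitone {α β : Type*} [LinearOrder β] (f : α → β) (l : List α) :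
    ∃ l' : List α, l'.Perm l ∧ l'.Pairwise fun a b => f b ≤ f a :=
  ⟨l.mergeSort fun a b => decide (f b ≤ f a), List.mergeSort_perm _ _, by
    simpa using List.pairwise_mergeSort (le := fun a b => decide (f b ≤ f a))
      (fun a b c hab hbc => by simp only [decide_eq_true_eq] at *; exact hbc.trans hab)
      (fun a b => by simpa using le_total (f b) (f a)) l⟩

lemma sqrt_sum_norm_sq_blocks_succ_le {Λ E : Type*} [DecidableEq Λ] [SeminormedAddCommGroup E]
    {x : Λ → E} {ω : Λ → ℝ} {lam : ℝ} {l : List Λ} (hω : ∀ i, 0 < ω i)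
    (hfit : ∀ i ∈ l, ω i ^ 2 ≤ lam) (hl : l.Nodup)
    (hsorted : l.Pairwise fun a b => ‖x b‖ / ω b ≤ ‖x a‖ / ω a)
    {j : ℕ} (hj : j + 1 < (blocks ω lam l).length) :
    √(∑ i ∈ (blocks ω lam l)[j + 1].toFinset, ‖x i‖ ^ 2) ≤
      1 / √lam * ∑ i ∈ (blocks ω lam l)[j].toFinset ∪ (blocks ω lam l)[j + 1].toFinset,
        ‖x i‖ * ω i := by
  have hflat := flatten_blocks ω lam l
  obtain ⟨hnodup, hdisj⟩ := List.nodup_flatten.mp (hflat ▸ hl)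
  obtain ⟨hwithin, hacross⟩ := List.pairwise_flatten.mp (hflat ▸ hsorted)
  obtain ⟨e, B, hnext⟩ :=
    List.exists_cons_of_ne_nil (ne_nil_of_mem_blocks ω (List.getElem_mem hj))
  have he : e ∈ (blocks ω lam l)[j + 1] := by simp [hnext]
  have hel : e ∈ l := hflat ▸ List.mem_flatten.mpr ⟨_, List.getElem_mem hj, he⟩
  have hover := List.isChain_iff_getElem.mp (isChain_blocks ω lam l) j hj e (by simp [hnext])
  rw [sqWeight_eq_sum_toFinset ω (hnodup _ (List.getElem_mem _))] at hover
  refine sqrt_sum_norm_sq_le_of_lt_sum_sq_add (x := x) hω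
    ((pow_pos (hω e) 2).trans_le (hfit e hel)) ?_
    (List.mem_toFinset.mpr he) (fun a ha => ?_) (fun b hb => ?_) hover
  · exact List.disjoint_toFinset_iff_disjoint.mpr
      (List.pairwise_iff_getElem.mp hdisj j (j + 1) _ hj j.lt_succ_self)
  · exact List.pairwise_iff_getElem.mp hacross j (j + 1) _ hj j.lt_succ_self a
      (List.mem_toFinset.mp ha) e he
  · have hsortedB := hwithin _ (List.getElem_mem hj)
    rw [hnext, List.pairwise_cons] at hsortedB
    rw [hnext, List.toFinset_cons, Finset.mem_insert, List.mem_toFinset] at hb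
    rcases hb with rfl | hb
    exacts [le_rfl, hsortedB.1 b hb]

theorem stmt18_general {Λ : Type*} [Fintype Λ] (ω : Λ → ℝ) (hω : ∀ i, 1 ≤ ω i)
    (x : Λ → ℂ) (S : Finset Λ) (s lam : ℝ)
    (hlam : 4 * s ≤ lam) (hωs : ∀ i, ω i ^ 2 ≤ 4 * s) :
    ∃ (K : ℕ) (Ω : ℕ → Finset Λ),
      (∀ j < K, (Ω j).Nonempty) ∧
      (∀ j, K ≤ j → Ω j = ∅) ∧
      (∀ j j', j ≠ j' → Disjoint (Ω j) (Ω j')) ∧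
      (Finset.range K).biUnion Ω = Sᶜ ∧
      (∀ j < K, ∑ i ∈ Ω j, ω i ^ 2 ≤ lam) ∧
      (∀ j, 1 ≤ j → j < K →
        Real.sqrt (∑ i ∈ Ω j, ‖x i‖ ^ 2) ≤
          1 / Real.sqrt lam * ∑ i ∈ Ω (j - 1) ∪ Ω j, ‖x i‖ * ω i) ∧
      (∑ j ∈ Finset.Ico 1 K, ∑ i ∈ Ω (j - 1) ∪ Ω j, ‖x i‖ * ω i ≤
        2 * ∑ i, ‖x i‖ * ω i) := by
  have hω0 : ∀ i, 0 < ω i := fun i => one_pos.trans_le (hω i)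
  have hfit : ∀ i, ω i ^ 2 ≤ lam := fun i => (hωs i).trans hlam
  have hterm : ∀ i, 0 ≤ ‖x i‖ * ω i := fun i => mul_nonneg (norm_nonneg _) (hω0 i).le
  obtain ⟨l, hperm, hsorted⟩ := exists_perm_pairwise_antitone (fun i => ‖x i‖ / ω i) Sᶜ.toList
  have hl : l.Nodup := hperm.nodup_iff.mpr Sᶜ.nodup_toList
  set L := blocks ω lam l
  have hL : L.flatten.Nodup := (flatten_blocks ω lam l).symm ▸ hl
  set Ω : ℕ → Finset Λ := fun j => (L.getD j []).toFinset
  have hΩ : ∀ j (hj : j < L.length), Ω j = L[j].toFinset := fun j hj => by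
    simp only [Ω, L.getD_eq_getElem _ hj]
  have hunion : (Finset.range L.length).biUnion Ω = Sᶜ := by
    rw [biUnion_range_toFinset_getD, flatten_blocks, List.toFinset_eq_of_perm _ _ hperm,
      Finset.toList_toFinset]
  have hdisj := pairwise_disjoint_toFinset_getD hL
  refine ⟨L.length, Ω, fun j hj => ?_, fun j hj => ?_, hdisj,
    hunion, fun j hj => ?_, fun j hj₁ hj => ?_, ?_⟩
  · rw [hΩ j hj, List.toFinset_nonempty_iff]
    exact ne_nil_of_mem_blocks ω (List.getElem_mem hj)
  · simp only [Ω, L.getD_eq_default _ hj, List.toFinset_nil]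
  · rw [hΩ j hj,
      ← sqWeight_eq_sum_toFinset ω ((List.nodup_flatten.mp hL).1 _ (List.getElem_mem hj))]
    exact sqWeight_le_of_mem_blocks ω (fun i _ => hfit i) (List.getElem_mem hj)
  · obtain ⟨j, rfl⟩ := Nat.exists_eq_add_of_le' hj₁
    rw [add_tsub_cancel_right, hΩ _ hj, hΩ j (Nat.lt_of_succ_lt hj)]
    exact sqrt_sum_norm_sq_blocks_succ_le hω0 (fun i _ => hfit i) hl hsorted hj
  · calc _ ≤ 2 * ∑ i ∈ Sᶜ, ‖x i‖ * ω i := hunion ▸ sum_Ico_sum_union_pred_le _ hterm hdisj _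
      _ ≤ 2 * ∑ i, ‖x i‖ * ω i := by grw [Finset.sum_le_univ_sum_of_nonneg hterm]

/-- Quasi-best sparse approximation chunking: for `x ∈ ℓ²(Λ)` (`Λ` finite), `S ⊆ Λ` with
`ω(S) ≤ s`, and `λ̃ ≥ 4s ≥ ‖ω‖∞²`, the complement `Sᶜ` can be partitioned into consecutive
blocks `Ω₀, Ω₁, …, Ω_{K−1}` (from the non-increasing rearrangement of `|x_k|/ω_k`), each
non-empty with `ω(Ω_j) ≤ λ̃`, such that for every `j ≥ 1`:
`‖x_{Ω_j}‖₂ ≤ (1/√λ̃)·‖x_{Ω_{j−1} ∪ Ω_j}‖_{1,ω}`, and consequently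
`∑_{j≥1} ‖x_{Ω_{j−1} ∪ Ω_j}‖_{1,ω} ≤ 2‖x‖_{1,ω}`. -/
theorem stmt18 {Λ : Type*} [Fintype Λ] (ω : Λ → ℝ) (hω : ∀ i, 1 ≤ ω i)
    (x : Λ → ℂ) (S : Finset Λ) (s lam : ℝ)
    (hS : ∑ i ∈ S, ω i ^ 2 ≤ s)
    (hlam : 4 * s ≤ lam) (hωs : ∀ i, ω i ^ 2 ≤ 4 * s) :
    ∃ (K : ℕ) (Ω : ℕ → Finset Λ),
      (∀ j < K, (Ω j).Nonempty) ∧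
      (∀ j, K ≤ j → Ω j = ∅) ∧
      (∀ j j', j ≠ j' → Disjoint (Ω j) (Ω j')) ∧
      (Finset.range K).biUnion Ω = Sᶜ ∧
      (∀ j < K, ∑ i ∈ Ω j, ω i ^ 2 ≤ lam) ∧
      (∀ j, 1 ≤ j → j < K →
        Real.sqrt (∑ i ∈ Ω j, ‖x i‖ ^ 2) ≤
          1 / Real.sqrt lam * ∑ i ∈ Ω (j - 1) ∪ Ω j, ‖x i‖ * ω i) ∧
      (∑ j ∈ Finset.Ico 1 K, ∑ i ∈ Ω (j - 1) ∪ Ω j, ‖x i‖ * ω i ≤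
        2 * ∑ i, ‖x i‖ * ω i) :=
  stmt18_general ω hω x S s lam hlam hωs
end
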